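/- arXiv:2409.03117 — 4 statements merged into one kernel-verified Lean document; each statement's English description precedes it below -/
import Mathlib

section
/- Stirling's formula: Γ(s+1) / (s^s e^{-s} √(2πs)) → 1 as s → +∞. -/
open Real Filter

namespace StirlingAux

noncomputable def F (s : ℝ) : ℝ :=
  Real.log (Real.Gamma (s + 1)) - s * Real.log s + s - 1 / 2 * Real.log (2 * Real.pi * s)

noncomputable def G (n : ℕ) : ℝ :=
  Real.log (Nat.factorial n) - n * Real.log n + n - 1 / 2 * Real.log (2 * Real.pi * n)

lemma G_tendsto : Tendsto G atTop (nhds 0) := by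
  have hpi : (0:ℝ) < Real.sqrt π := Real.sqrt_pos.mpr Real.pi_pos
  have h1 : Tendsto (fun n => Real.log (Stirling.stirlingSeq n) - Real.log (Real.sqrt π))
      atTop (nhds 0) := by
    have := ((Real.continuousAt_log hpi.ne').tendsto.comp
      Stirling.tendsto_stirlingSeq_sqrt_pi).sub_const (Real.log (Real.sqrt π))
    simpa using this
  refine h1.congr' ?_
  filter_upwards [eventually_ge_atTop 1] with n hn
  have hn0 : (0:ℝ) < n := by exact_mod_cast hn
  rw [Stirling.log_stirlingSeq_formula, G, Real.log_sqrt Real.pi_pos.le,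
    Real.log_div (by positivity) (Real.exp_ne_zero 1),
    Real.log_mul two_ne_zero hn0.ne',
    Real.log_mul (mul_ne_zero two_ne_zero Real.pi_pos.ne') hn0.ne',
    Real.log_mul two_ne_zero Real.pi_pos.ne', Real.log_exp]
  ring


lemma fact_eq (n : ℕ) : Real.log (Real.Gamma (n + 1)) = Real.log (Nat.factorial n) := by
  rw [Real.Gamma_nat_eq_factorial]

lemma log_gamma_lower {s : ℝ} {n : ℕ} (hn : 1 ≤ n) (hns : (n : ℝ) ≤ s) :
    Real.log (Nat.factorial n) + (s - n) * Real.log n ≤ Real.log (Real.Gamma (s + 1)) := by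
  have hn0 : (0:ℝ) < n := by exact_mod_cast hn
  rcases eq_or_lt_of_le hns with h | h
  · rw [← h, sub_self, zero_mul, add_zero, fact_eq]
  · have hGn : (0:ℝ) < Real.Gamma n := Real.Gamma_pos_of_pos hn0
    have hC : Real.log (Real.Gamma ((n:ℝ) + 1)) = Real.log n + Real.log (Real.Gamma n) := by
      rw [Real.Gamma_add_one hn0.ne', Real.log_mul hn0.ne' hGn.ne']
    have hsec := Real.convexOn_log_Gamma.secant_mono (a := (n:ℝ)) (x := (n:ℝ) + 1)
      (y := s + 1) (by simpa using hn0) (by simp; linarith) (by simp; linarith)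
      (by simp) (by intro hc; linarith [hc ▸ h]) (by linarith)
    simp only [Function.comp_apply, add_sub_cancel_left] at hsec
    rw [div_one] at hsec
    have h1 : (0:ℝ) < s + 1 - n := by linarith
    rw [le_div_iff₀ h1] at hsec
    have hfac : Real.log (Real.Gamma ((n:ℝ) + 1)) = Real.log (Nat.factorial n) := fact_eq n
    nlinarith [hsec, hC, hfac]


lemma log_gamma_upper {s : ℝ} {n : ℕ} (hn : 1 ≤ n) (hns : (n : ℝ) ≤ s) (hsn : s < n + 1) :
    Real.log (Real.Gamma (s + 1)) ≤
      Real.log (Nat.factorial n) + (s - n) * Real.log (n + 1) := by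
  have hn0 : (0:ℝ) < n := by exact_mod_cast hn
  have key := Real.convexOn_log_Gamma.2
    (show ((n:ℝ) + 1) ∈ Set.Ioi (0:ℝ) by simp; linarith)
    (show ((n:ℝ) + 2) ∈ Set.Ioi (0:ℝ) by simp; linarith)
    (show (0:ℝ) ≤ 1 - (s - (n:ℝ)) by linarith)
    (show (0:ℝ) ≤ s - (n:ℝ) by linarith)
    (show (1 - (s - (n:ℝ))) + (s - (n:ℝ)) = 1 by ring)
  have hpt : (1 - (s - n)) • ((n:ℝ) + 1) + (s - n) • ((n:ℝ) + 2) = s + 1 := by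
    simp only [smul_eq_mul]; ring
  rw [hpt] at key
  simp only [Function.comp_apply, smul_eq_mul] at key
  have h2 : Real.log (Real.Gamma ((n:ℝ) + 2)) =
      Real.log ((n:ℝ) + 1) + Real.log (Nat.factorial n) := by
    have : ((n:ℝ) + 2) = ((n:ℝ) + 1) + 1 := by ring
    rw [this, Real.Gamma_add_one (by positivity),
      Real.log_mul (by positivity) (Real.Gamma_pos_of_pos (by positivity)).ne', fact_eq]
  have h1 := fact_eq n
  nlinarith [key, h1, h2]


lemma F_sub_G_bounds {s : ℝ} (hs : 1 ≤ s) :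
    |F s - G ⌊s⌋₊| ≤ 2 / ⌊s⌋₊ := by
  set n := ⌊s⌋₊ with hn_def
  have hs0 : (0:ℝ) < s := by linarith
  have hn : 1 ≤ n := Nat.le_floor (by exact_mod_cast hs)
  have hn0 : (0:ℝ) < n := by exact_mod_cast hn
  have hns : (n:ℝ) ≤ s := Nat.floor_le hs0.le
  have hsn : s < n + 1 := Nat.lt_floor_add_one s
  have hθ0 : 0 ≤ s - n := by linarith
  have hθ1 : s - n < 1 := by linarith
  -- log inequalities
  have hA : s * Real.log n - s * Real.log s ≤ (n:ℝ) - s := by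
    have h := Real.log_le_sub_one_of_pos (show (0:ℝ) < n / s by positivity)
    rw [Real.log_div hn0.ne' hs0.ne'] at h
    have := mul_le_mul_of_nonneg_left h hs0.le
    rw [mul_sub] at this
    calc s * Real.log n - s * Real.log s = s * (Real.log n - Real.log s) := by ring
      _ ≤ s * (n / s - 1) := by nlinarith
      _ = (n:ℝ) - s := by field_simp
  have hB : s * Real.log s - s * Real.log n ≤ s * (s - n) / n := by
    have h := Real.log_le_sub_one_of_pos (show (0:ℝ) < s / n by positivity)
    rw [Real.log_div hs0.ne' hn0.ne'] at h
    calc s * Real.log s - s * Real.log n = s * (Real.log s - Real.log n) := by ring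
      _ ≤ s * (s / n - 1) := by nlinarith
      _ = s * (s - n) / n := by field_simp
  have hC : Real.log s - Real.log n ≤ 1 / n := by
    have h := Real.log_le_sub_one_of_pos (show (0:ℝ) < s / n by positivity)
    rw [Real.log_div hs0.ne' hn0.ne'] at h
    have : s / n - 1 = (s - n) / n := by field_simp
    rw [this] at h
    refine h.trans ?_
    gcongr
  have hD : Real.log ((n:ℝ) + 1) - Real.log n ≤ 1 / n := by
    have h := Real.log_le_sub_one_of_pos (show (0:ℝ) < ((n:ℝ)+1) / n by positivity)
    rw [Real.log_div (by positivity) hn0.ne'] at h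
    have : ((n:ℝ)+1) / n - 1 = 1 / n := by field_simp; ring
    linarith [this ▸ h]
  have huv : Real.log n ≤ Real.log s := Real.log_le_log hn0 hns
  have hvw : Real.log n ≤ Real.log ((n:ℝ)+1) := Real.log_le_log hn0 (by linarith)
  have hup := log_gamma_upper hn hns hsn
  have hlo := log_gamma_lower hn hns
  have h2pis : Real.log (2 * Real.pi * s) = Real.log (2 * Real.pi) + Real.log s :=
    Real.log_mul (by positivity) hs0.ne'
  have h2pin : Real.log (2 * Real.pi * (n:ℝ)) = Real.log (2 * Real.pi) + Real.log n :=
    Real.log_mul (by positivity) hn0.ne'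
  have hsB : s * (s - n) / n = (s - n) + (s-n)^2 / n := by
    field_simp; ring
  have hB2 : s * Real.log s - s * Real.log n ≤ (s - n) + (s-n)^2 / n := by
    rw [← hsB]; exact hB
  have hsq : (s - n)^2 / n ≤ 1 / n := by
    gcongr
    nlinarith
  have hnn : 1 / (n:ℝ) ≤ 2 / n - 1 / n := by rw [div_sub_div_same]; norm_num
  rw [abs_le]
  constructor
  · rw [F, G, h2pis, h2pin]
    nlinarith [hlo, hB2, hC, hsq, div_pos one_pos hn0]
  · rw [F, G, h2pis, h2pin]
    nlinarith [hup, hA, huv, mul_le_mul_of_nonneg_left hD hθ0,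
      mul_le_mul_of_nonneg_right hθ1.le (le_of_lt (div_pos one_pos hn0)),
      div_pos one_pos hn0]


lemma F_tendsto : Tendsto F atTop (nhds 0) := by
  have hfloor : Tendsto (fun s : ℝ => ⌊s⌋₊) atTop atTop := tendsto_nat_floor_atTop
  have hG : Tendsto (fun s : ℝ => G ⌊s⌋₊) atTop (nhds 0) := G_tendsto.comp hfloor
  have h2n : Tendsto (fun s : ℝ => 2 / (⌊s⌋₊ : ℝ)) atTop (nhds 0) :=
    (tendsto_const_div_atTop_nhds_zero_nat 2).comp hfloor
  have hlo : Tendsto (fun s : ℝ => G ⌊s⌋₊ - 2 / (⌊s⌋₊ : ℝ)) atTop (nhds 0) := by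
    simpa using hG.sub h2n
  have hhi : Tendsto (fun s : ℝ => G ⌊s⌋₊ + 2 / (⌊s⌋₊ : ℝ)) atTop (nhds 0) := by
    simpa using hG.add h2n
  refine tendsto_of_tendsto_of_tendsto_of_le_of_le' hlo hhi ?_ ?_
  · filter_upwards [eventually_ge_atTop (1:ℝ)] with s hs
    have := (abs_le.mp (F_sub_G_bounds hs)).1
    linarith
  · filter_upwards [eventually_ge_atTop (1:ℝ)] with s hs
    have := (abs_le.mp (F_sub_G_bounds hs)).2
    linarith

end StirlingAux

/-- Stirling's formula: `Γ(s+1) / (s^s e^{-s} √(2πs)) → 1` as `s → +∞`. -/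
theorem stirling_formula :
    Filter.Tendsto
      (fun s : ℝ => Real.Gamma (s + 1) /
        (Real.rpow s s * Real.exp (-s) * Real.sqrt (2 * Real.pi * s)))
      Filter.atTop (nhds 1) := by
  have h := (Real.continuous_exp.tendsto 0).comp StirlingAux.F_tendsto
  rw [Real.exp_zero] at h
  refine h.congr' ?_
  filter_upwards [eventually_ge_atTop (1:ℝ)] with s hs
  have hs0 : (0:ℝ) < s := by linarith
  have hG : (0:ℝ) < Real.Gamma (s + 1) := Real.Gamma_pos_of_pos (by linarith)
  have h1 : Real.Gamma (s + 1) = Real.exp (Real.log (Real.Gamma (s + 1))) :=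
    (Real.exp_log hG).symm
  have h2 : Real.sqrt (2 * Real.pi * s) = Real.exp (Real.log (2 * Real.pi * s) / 2) := by
    rw [← Real.log_sqrt (by positivity)]
    exact (Real.exp_log (Real.sqrt_pos.mpr (by positivity))).symm
  show Real.exp (StirlingAux.F s) = _
  rw [StirlingAux.F, show Real.rpow s s = s ^ s from rfl, Real.rpow_def_of_pos hs0, h2]
  conv_rhs => rw [h1]
  rw [← Real.exp_add, ← Real.exp_add, ← Real.exp_sub]
  congr 1
  ring
end

section
/- Cayley's formula: the number of labeled trees on n vertices (n ≥ 1) is n^{n−2}. -/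
namespace Cayley
open SimpleGraph Walk



variable {V : Type}

/-- degree as `Set.ncard` to avoid instance juggling. -/
noncomputable def deg (G : SimpleGraph V) (v : V) : ℕ := (G.neighborSet v).ncard

/-- Delete a vertex. -/
def delVert (G : SimpleGraph V) (ℓ : V) : SimpleGraph {x : V // x ≠ ℓ} :=
  SimpleGraph.comap Subtype.val G

@[simp] lemma delVert_adj {G : SimpleGraph V} {ℓ : V} {x y : {x : V // x ≠ ℓ}} :
    (delVert G ℓ).Adj x y ↔ G.Adj x.1 y.1 := Iff.rfl

/-- Attach a pendant vertex `ℓ` to `a`. -/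
def addLeaf (ℓ : V) (a : {x : V // x ≠ ℓ}) (G' : SimpleGraph {x : V // x ≠ ℓ}) :
    SimpleGraph V where
  Adj x y := (∃ (hx : x ≠ ℓ) (hy : y ≠ ℓ), G'.Adj ⟨x, hx⟩ ⟨y, hy⟩)
    ∨ (x = ℓ ∧ y = a.1) ∨ (x = a.1 ∧ y = ℓ)
  symm := ⟨by
    rintro x y (⟨hx, hy, h⟩ | ⟨rfl, rfl⟩ | ⟨rfl, rfl⟩)
    · exact Or.inl ⟨hy, hx, h.symm⟩
    · exact Or.inr (Or.inr ⟨rfl, rfl⟩)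
    · exact Or.inr (Or.inl ⟨rfl, rfl⟩)⟩
  loopless := ⟨by
    rintro x (⟨hx, hy, h⟩ | ⟨rfl, h⟩ | ⟨h, rfl⟩)
    · exact G'.loopless.irrefl _ h
    · exact a.2 h.symm
    · exact a.2 h.symm⟩

lemma addLeaf_adj_ell {ℓ : V} {a : {x : V // x ≠ ℓ}} {G' : SimpleGraph {x : V // x ≠ ℓ}}
    {x : V} : (addLeaf ℓ a G').Adj ℓ x ↔ x = a.1 := by
  constructor
  · rintro (⟨hx, hy, h⟩ | ⟨-, rfl⟩ | ⟨h, rfl⟩)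
    · exact absurd rfl hx
    · rfl
    · exact h
  · rintro rfl; exact Or.inr (Or.inl ⟨rfl, rfl⟩)

lemma addLeaf_adj_of_ne {ℓ : V} {a : {x : V // x ≠ ℓ}} {G' : SimpleGraph {x : V // x ≠ ℓ}}
    {x y : V} (hx : x ≠ ℓ) (hy : y ≠ ℓ) :
    (addLeaf ℓ a G').Adj x y ↔ G'.Adj ⟨x, hx⟩ ⟨y, hy⟩ := by
  constructor
  · rintro (⟨hx', hy', h⟩ | ⟨rfl, -⟩ | ⟨-, rfl⟩)
    · exact h
    · exact absurd rfl hx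
    · exact absurd rfl hy
  · intro h; exact Or.inl ⟨hx, hy, h⟩

@[simp] lemma delVert_addLeaf {ℓ : V} {a : {x : V // x ≠ ℓ}}
    {G' : SimpleGraph {x : V // x ≠ ℓ}} : delVert (addLeaf ℓ a G') ℓ = G' := by
  ext x y
  simp [delVert_adj, addLeaf_adj_of_ne x.2 y.2]

/-- A graph whose vertex `ℓ`'s neighborhood is exactly `{a}` is the pendant extension of its
restriction. -/
lemma eq_addLeaf {G : SimpleGraph V} {ℓ : V} {a : {x : V // x ≠ ℓ}}
    (h : ∀ x, G.Adj ℓ x ↔ x = a.1) : G = addLeaf ℓ a (delVert G ℓ) := by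
  ext x y
  by_cases hx : x = ℓ
  · subst hx
    rw [h y, addLeaf_adj_ell]
  by_cases hy : y = ℓ
  · subst hy
    rw [G.adj_comm x y, h x, (addLeaf y a (delVert G y)).adj_comm x y, addLeaf_adj_ell]
  · rw [addLeaf_adj_of_ne hx hy, delVert_adj]



lemma deg_eq_degree [Fintype V] (G : SimpleGraph V) (v : V) [Fintype (G.neighborSet v)] :
    G.degree v = deg G v := by
  rw [deg, ← card_neighborSet_eq_degree, Set.ncard_eq_toFinset_card', Set.toFinset_card]

/-- a vertex of degree one has a unique neighbor. -/
lemma exists_unique_nbr {G : SimpleGraph V} {ℓ : V} (h : deg G ℓ = 1) :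
    ∃ a : {x : V // x ≠ ℓ}, ∀ x, G.Adj ℓ x ↔ x = a.1 := by
  obtain ⟨a, ha⟩ := Set.ncard_eq_one.mp h
  have haa : G.Adj ℓ a := by
    have : a ∈ G.neighborSet ℓ := ha ▸ rfl
    exact this
  refine ⟨⟨a, fun hh => G.loopless.irrefl ℓ (hh ▸ haa)⟩, fun x => ?_⟩
  constructor
  · intro hx
    have : x ∈ G.neighborSet ℓ := hx
    rw [ha] at this
    exact this
  · rintro rfl; exact haa

/-- Every connected graph on at least two vertices has min degree ≥ 1. -/
lemma one_le_deg [Fintype V] {G : SimpleGraph V} (hG : G.Connected)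
    (hcard : 2 ≤ Fintype.card V) (v : V) : 1 ≤ deg G v := by
  obtain ⟨w, hw⟩ := Fintype.exists_ne_of_one_lt_card hcard v
  obtain ⟨p⟩ := hG v w
  obtain ⟨x, h, q, rfl⟩ := SimpleGraph.Walk.exists_eq_cons_of_ne (Ne.symm hw) p
  have hx : x ∈ G.neighborSet v := h
  exact (Set.ncard_pos (Set.toFinite _)).mpr ⟨x, hx⟩

/-- Every finite tree on at least two vertices has a leaf. -/
lemma exists_leaf [Fintype V] {G : SimpleGraph V} (hG : G.IsTree)
    (hcard : 2 ≤ Fintype.card V) : ∃ v, deg G v = 1 := by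
  classical
  by_contra hno
  push_neg at hno
  have h2 : ∀ v, 2 ≤ deg G v := by
    intro v
    have h1 := one_le_deg hG.isConnected hcard v
    have := hno v
    omega
  have hsum : ∑ v, G.degree v = 2 * G.edgeFinset.card :=
    SimpleGraph.sum_degrees_eq_twice_card_edges G
  have hedge : G.edgeFinset.card + 1 = Fintype.card V := hG.card_edgeFinset
  have hge : 2 * Fintype.card V ≤ ∑ v, G.degree v := by
    calc 2 * Fintype.card V = ∑ _v : V, 2 := by simp [mul_comm]
    _ ≤ ∑ v, G.degree v := Finset.sum_le_sum (fun v _ => by rw [deg_eq_degree]; exact h2 v)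
  omega

lemma deg_addLeaf_ell {ℓ : V} {a : {x : V // x ≠ ℓ}} {G' : SimpleGraph {x : V // x ≠ ℓ}} :
    deg (addLeaf ℓ a G') ℓ = 1 := by
  have : (addLeaf ℓ a G').neighborSet ℓ = {a.1} := by
    ext x; simp only [mem_neighborSet, Set.mem_singleton_iff, addLeaf_adj_ell]
  rw [deg, this, Set.ncard_singleton]

lemma nbhdSet_addLeaf {ℓ : V} {a : {x : V // x ≠ ℓ}}
    {G' : SimpleGraph {x : V // x ≠ ℓ}} {x : V} (hx : x ≠ ℓ) :
    (addLeaf ℓ a G').neighborSet x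
      = Subtype.val '' (G'.neighborSet ⟨x, hx⟩) ∪ {y | y = ℓ ∧ x = a.1} := by
  ext y
  simp only [mem_neighborSet, Set.mem_union, Set.mem_image, Set.mem_setOf_eq]
  by_cases hy : y = ℓ
  · rw [hy, (addLeaf ℓ a G').adj_comm, addLeaf_adj_ell]
    constructor
    · intro h; exact Or.inr ⟨rfl, h⟩
    · rintro (⟨z, _, hz⟩ | ⟨-, h⟩)
      · exact absurd hz z.2
      · exact h
  · rw [addLeaf_adj_of_ne hx hy]
    constructor
    · intro h; exact Or.inl ⟨⟨y, hy⟩, h, rfl⟩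
    · rintro (⟨z, hz, rfl⟩ | ⟨h, -⟩)
      · exact hz
      · exact absurd h hy

lemma deg_addLeaf_of_ne_of_ne [Fintype V] {ℓ : V} {a : {x : V // x ≠ ℓ}}
    {G' : SimpleGraph {x : V // x ≠ ℓ}} {x : V} (hx : x ≠ ℓ) (hxa : x ≠ a.1) :
    deg (addLeaf ℓ a G') x = deg G' ⟨x, hx⟩ := by
  have h2 : {y | y = ℓ ∧ x = a.1} = (∅ : Set V) := by
    ext y; simp [hxa]
  rw [deg, nbhdSet_addLeaf hx, h2, Set.union_empty,
    Set.ncard_image_of_injective _ Subtype.val_injective, deg]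

lemma deg_addLeaf_a [Fintype V] {ℓ : V} {a : {x : V // x ≠ ℓ}}
    {G' : SimpleGraph {x : V // x ≠ ℓ}} :
    deg (addLeaf ℓ a G') a.1 = deg G' a + 1 := by
  have h2 : {y | y = ℓ ∧ a.1 = a.1} = ({ℓ} : Set V) := by
    ext y; simp
  rw [deg, nbhdSet_addLeaf a.2, h2, Set.union_singleton,
    Set.ncard_insert_of_notMem ?nm (Set.toFinite _),
    Set.ncard_image_of_injective _ Subtype.val_injective, deg]
  case nm =>
    rintro ⟨z, -, hz⟩
    exact z.2 hz


section toolkit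
variable {G : SimpleGraph V} {ℓ : V} {H : SimpleGraph {x : V // x ≠ ℓ}}

lemma copy_heq {G : SimpleGraph V} {u v u' v' : V} (p : G.Walk u v) (hu : u = u') (hv : v = v') :
    HEq (p.copy hu hv) p := by
  subst hu; subst hv; rw [Walk.copy_rfl_rfl]

/-- Lift a walk avoiding `ℓ` to a graph on the subtype. -/
def liftWalk (hGH : ∀ x y : {x : V // x ≠ ℓ}, G.Adj x.1 y.1 → H.Adj x y) :
    ∀ {u w : V} (p : G.Walk u w) (h : ∀ x ∈ p.support, x ≠ ℓ),
      H.Walk ⟨u, h u p.start_mem_support⟩ ⟨w, h w p.end_mem_support⟩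
  | u, _, Walk.nil, h => Walk.nil
  | u, w, Walk.cons (v := y) hadj q, h =>
      Walk.cons (hGH ⟨u, h u (Walk.cons hadj q).start_mem_support⟩
          ⟨y, h y (by simp)⟩ hadj)
        (liftWalk hGH q (fun x hx => h x (by simp [hx])))

lemma map_liftWalk (hGH : ∀ x y : {x : V // x ≠ ℓ}, G.Adj x.1 y.1 → H.Adj x y)
    (f : H →g G) (hf : ∀ x, f x = x.1)
    {u w : V} (p : G.Walk u w) (h : ∀ x ∈ p.support, x ≠ ℓ) :
    (liftWalk hGH p h).map f
      = p.copy (hf ⟨u, h u p.start_mem_support⟩).symm (hf ⟨w, h w p.end_mem_support⟩).symm := by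
  induction p with
  | nil => simp [liftWalk]
  | cons hadj q ih =>
      simp only [liftWalk, Walk.map_cons, ih]
      rw [Walk.copy_cons]
      congr 1
      · simp [hf]
      · simp [hf]
      · exact (copy_heq _ _ _).trans (copy_heq _ _ _).symm


end toolkit

section trees
variable {G : SimpleGraph V} {ℓ : V} {H : SimpleGraph {x : V // x ≠ ℓ}}

lemma isCycle_liftWalk (hGH : ∀ x y : {x : V // x ≠ ℓ}, G.Adj x.1 y.1 → H.Adj x y)
    (hHG : ∀ x y : {x : V // x ≠ ℓ}, H.Adj x y → G.Adj x.1 y.1)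
    {v : V} (c : G.Walk v v) (hc : c.IsCycle) (h : ∀ x ∈ c.support, x ≠ ℓ) :
    (liftWalk hGH c h).IsCycle := by
  let f : H →g G := ⟨Subtype.val, fun {x y} hxy => hHG x y hxy⟩
  have hf : ∀ x, f x = x.1 := fun _ => rfl
  have hmap : (liftWalk hGH c h).map f = c := by
    rw [map_liftWalk hGH f hf c h]; rfl
  have hinj : Function.Injective f := Subtype.val_injective
  have hc2 := hc
  rw [← hmap] at hc2
  exact (Walk.map_isCycle_iff_of_injective hinj).mp hc2

/-- a walk in the subtype graph maps to a walk in `G`. -/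
def downWalk (hHG : ∀ x y : {x : V // x ≠ ℓ}, H.Adj x y → G.Adj x.1 y.1) :
    H →g G := ⟨Subtype.val, fun {x y} hxy => hHG x y hxy⟩

/-- No path between vertices other than `ℓ` passes through a pendant vertex `ℓ`. -/
lemma path_avoids_pendant {a : V} (ha : ∀ x, G.Adj ℓ x ↔ x = a)
    {u w : V} (hu : u ≠ ℓ) (hw : w ≠ ℓ) (p : G.Walk u w) (hp : p.IsPath) :
    ∀ x ∈ p.support, x ≠ ℓ := by
  classical
  have haℓ : a ≠ ℓ := by
    rintro rfl
    exact G.loopless.irrefl a ((ha a).mpr rfl)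
  classical
  intro x hx hxℓ
  rw [hxℓ] at hx
  set q := p.takeUntil ℓ hx with hq
  set r := p.dropUntil ℓ hx with hr
  have hspec := p.take_spec hx
  have hnodup : (q.support ++ r.support.tail).Nodup := by
    rw [← Walk.support_append, hspec]
    exact hp.support_nodup
  have hdisj := List.disjoint_of_nodup_append hnodup
  -- q : u → ℓ, nonnil; its last edge comes from a
  have haq : a ∈ q.support := by
    obtain ⟨z, hadj, q1, hq1⟩ := Walk.exists_eq_cons_of_ne (Ne.symm hu) q.reverse
    have hz : z = a := (ha z).mp hadj
    have : z ∈ q.reverse.support := by rw [hq1]; simp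
    rw [Walk.support_reverse, List.mem_reverse] at this
    rwa [hz] at this
  have har : a ∈ r.support.tail := by
    obtain ⟨z, hadj, r1, hr1⟩ := Walk.exists_eq_cons_of_ne (Ne.symm hw) r
    have hz : z = a := (ha z).mp hadj
    rw [hr1]
    simp only [Walk.support_cons, List.tail_cons]
    rw [← hz]
    exact r1.start_mem_support
  exact hdisj haq har

/-- No cycle passes through a pendant vertex. -/
lemma cycle_avoids_pendant {a : V} (ha : ∀ x, G.Adj ℓ x ↔ x = a)
    {v : V} (c : G.Walk v v) (hc : c.IsCycle) : ℓ ∉ c.support := by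
  classical
  intro hmem
  set c' := c.rotate ℓ hmem with hc'def
  have hc' : c'.IsCycle := hc.rotate hmem
  have hnn : ¬ c'.Nil := by
    intro hn
    have := hc'.three_le_length
    rw [Walk.nil_iff_length_eq.mp hn] at this
    omega
  obtain ⟨x, hadj, q, hq⟩ := Walk.not_nil_iff.mp hnn
  have hx : x = a := (ha x).mp hadj
  -- last edge of q is also s(ℓ, a)
  have hqnn : ¬ q.Nil := by
    intro hn
    have h3 := hc'.three_le_length
    rw [hq, Walk.length_cons, Walk.nil_iff_length_eq.mp hn] at h3
    omega
  have hqrev : ¬ q.reverse.Nil := by rwa [Walk.nil_iff_length_eq, Walk.length_reverse,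
    ← Walk.nil_iff_length_eq]
  obtain ⟨y, hadj2, r, hr⟩ := Walk.not_nil_iff.mp hqrev
  have hy : y = a := (ha y).mp hadj2
  have hmem2 : s(ℓ, a) ∈ q.edges := by
    have : s(ℓ, y) ∈ q.reverse.edges := by rw [hr]; simp
    rw [Walk.edges_reverse, List.mem_reverse, hy] at this
    exact this
  have hnodup := hc'.edges_nodup
  rw [hq, Walk.edges_cons] at hnodup
  rw [← hx] at hmem2
  exact (List.nodup_cons.mp hnodup).1 hmem2

end trees
section surgery
variable {G : SimpleGraph V} {ℓ : V}

/-- Removing a pendant vertex from a tree leaves a tree. -/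
lemma delVert_isTree {a : {x : V // x ≠ ℓ}} (hG : G.IsTree)
    (ha : ∀ x, G.Adj ℓ x ↔ x = a.1) : (delVert G ℓ).IsTree := by
  classical
  constructor
  · -- connected
    haveI : Nonempty {x : V // x ≠ ℓ} := ⟨a⟩
    refine Connected.mk fun u w => ?_
    obtain ⟨p⟩ := hG.isConnected u.1 w.1
    have hp := p.toPath.2
    have havoid : ∀ x ∈ (p.toPath : G.Walk u.1 w.1).support, x ≠ ℓ :=
      path_avoids_pendant ha u.2 w.2 _ hp
    have hw := liftWalk (H := delVert G ℓ) (fun x y h => h) (p.toPath : G.Walk u.1 w.1) havoid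
    exact ⟨hw.copy (Subtype.ext rfl) (Subtype.ext rfl)⟩
  · -- acyclic
    intro v c hc
    let f := downWalk (G := G) (H := delVert G ℓ) (fun x y h => h)
    have : (c.map f).IsCycle := (Walk.map_isCycle_iff_of_injective
      (Subtype.val_injective : Function.Injective f)).mpr hc
    exact hG.IsAcyclic _ this

/-- Attaching a pendant vertex to a tree gives a tree. -/
lemma addLeaf_isTree {a : {x : V // x ≠ ℓ}} {G' : SimpleGraph {x : V // x ≠ ℓ}}
    (hG' : G'.IsTree) : (addLeaf ℓ a G').IsTree := by
  have hadj : ∀ x y : {x : V // x ≠ ℓ}, G'.Adj x y → (addLeaf ℓ a G').Adj x.1 y.1 :=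
    fun x y h => (addLeaf_adj_of_ne x.2 y.2).mpr h
  let f := downWalk (G := addLeaf ℓ a G') (H := G') hadj
  constructor
  · -- connected
    have hreach : ∀ x : V, (addLeaf ℓ a G').Reachable x ℓ := by
      intro x
      by_cases hx : x = ℓ
      · rw [hx]
      · have h1 : G'.Reachable ⟨x, hx⟩ a := hG'.isConnected ⟨x, hx⟩ a
        have h2 : (addLeaf ℓ a G').Reachable x a.1 := h1.map f
        exact h2.trans (Adj.reachable ((addLeaf ℓ a G').adj_symm (addLeaf_adj_ell.mpr rfl)))
    haveI : Nonempty V := ⟨ℓ⟩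
    exact Connected.mk fun u w => (hreach u).trans (hreach w).symm
  · -- acyclic
    intro v c hc
    have havoid : ∀ x ∈ c.support, x ≠ ℓ := by
      intro x hx hxl
      rw [hxl] at hx
      exact cycle_avoids_pendant (a := a.1) (fun x => addLeaf_adj_ell) c hc hx
    have := isCycle_liftWalk (H := G') (fun x y h => (addLeaf_adj_of_ne x.2 y.2).mp h)
      (fun x y h => hadj x y h) c hc havoid
    exact hG'.IsAcyclic _ this

end surgery

section small
variable [Fintype V]

lemma tree_graphs_subsingleton_one (h : Fintype.card V = 1) (G₁ G₂ : SimpleGraph V) :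
    G₁ = G₂ := by
  haveI := Fintype.card_le_one_iff_subsingleton.mp h.le
  ext x y
  constructor <;> intro hadj <;>
    exact absurd (Subsingleton.elim x y) (by rintro rfl; exact (SimpleGraph.irrefl _) hadj)

lemma bot_isTree_of_card_one (h : Fintype.card V = 1) : (⊥ : SimpleGraph V).IsTree := by
  haveI : Nonempty V := Fintype.card_pos_iff.mp (by omega)
  haveI := Fintype.card_le_one_iff_subsingleton.mp h.le
  constructor
  · exact Connected.mk fun u v => (Subsingleton.elim u v) ▸ Reachable.refl u
  · exact isAcyclic_bot

lemma deg_eq_zero_of_card_one (h : Fintype.card V = 1) (G : SimpleGraph V) (v : V) :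
    deg G v = 0 := by
  haveI := Fintype.card_le_one_iff_subsingleton.mp h.le
  have : G.neighborSet v = ∅ := by
    ext w
    simp only [mem_neighborSet, Set.mem_empty_iff_false, iff_false]
    intro hadj
    exact absurd (Subsingleton.elim v w) (G.ne_of_adj hadj)
  rw [deg, this, Set.ncard_empty]

lemma deg_le_card_sub_one (G : SimpleGraph V) (v : V) : deg G v ≤ Fintype.card V - 1 := by
  have hsub : G.neighborSet v ⊆ {v}ᶜ := fun w hw => fun hmem =>
    G.ne_of_adj hw (Set.mem_singleton_iff.mp hmem).symm
  calc deg G v ≤ ({v}ᶜ : Set V).ncard := Set.ncard_le_ncard hsub (Set.toFinite _)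
  _ = Fintype.card V - 1 := by
    rw [Set.compl_eq_univ_diff, Set.ncard_diff (Set.subset_univ _), Set.ncard_singleton,
      Set.ncard_univ, Nat.card_eq_fintype_card]

lemma tree_adj_of_card_two (h : Fintype.card V = 2) {G : SimpleGraph V} (hG : G.IsTree)
    (x y : V) : G.Adj x y ↔ x ≠ y := by
  constructor
  · exact G.ne_of_adj
  · intro hxy
    obtain ⟨p⟩ := hG.isConnected x y
    obtain ⟨z, hadj, q, -⟩ := Walk.exists_eq_cons_of_ne hxy p
    have hz : z = y := by
      by_contra hzy
      have hnd : [x, y, z].Nodup := by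
        simp only [List.nodup_cons, List.mem_cons, List.not_mem_nil, or_false,
          List.nodup_nil, and_true, List.mem_singleton]
        exact ⟨fun hh => hh.elim hxy (G.ne_of_adj hadj), fun hh => hzy hh.symm, not_false⟩
      have := List.Nodup.length_le_card hnd
      rw [h] at this
      simp at this
    rwa [hz] at hadj

lemma tree_unique_of_card_two (h : Fintype.card V = 2) {G₁ G₂ : SimpleGraph V}
    (h₁ : G₁.IsTree) (h₂ : G₂.IsTree) : G₁ = G₂ := by
  ext x y
  rw [tree_adj_of_card_two h h₁, tree_adj_of_card_two h h₂]

lemma top_isTree_of_card_two (h : Fintype.card V = 2) : (⊤ : SimpleGraph V).IsTree := by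
  haveI : Nonempty V := Fintype.card_pos_iff.mp (by omega)
  constructor
  · exact connected_top
  · intro v c hc
    have h3 := hc.three_le_length
    have hnd := hc.support_nodup
    have hlc := List.Nodup.length_le_card hnd
    rw [h] at hlc
    have hts : c.support.tail.length = c.length := by
      rw [List.length_tail, Walk.length_support]
      omega
    omega

lemma deg_le_one_of_card_two (h : Fintype.card V = 2) (G : SimpleGraph V) (v : V) :
    deg G v ≤ 1 := by
  have := deg_le_card_sub_one G v
  omega

end small
section main

theorem pruefer_count : ∀ (n : ℕ), 1 ≤ n → ∀ (V : Type) [Fintype V] [LinearOrder V],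
    Fintype.card V = n →
    ∃ f : {G : SimpleGraph V // G.IsTree} → List V,
      (∀ T, (f T).length = n - 2) ∧
      (∀ T v, v ∈ f T ↔ 2 ≤ deg T.1 v) ∧
      Function.Injective f ∧
      (∀ l : List V, l.length = n - 2 → ∃ T, f T = l) := by
  intro n
  induction n using Nat.strong_induction_on with
  | _ n ih =>
  intro hn V I1 I2 hcard
  classical
  match n, hn, ih, hcard with
  | 1, hn, ih, hcard =>
    refine ⟨fun _ => [], fun T => rfl, ?_, ?_, ?_⟩
    · intro T v
      simp only [List.not_mem_nil, false_iff]
      rw [deg_eq_zero_of_card_one hcard]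
      omega
    · intro T₁ T₂ _
      exact Subtype.ext (tree_graphs_subsingleton_one hcard _ _)
    · intro l hl
      have hl0 : l = [] := List.eq_nil_of_length_eq_zero (by simpa using hl)
      exact ⟨⟨⊥, bot_isTree_of_card_one hcard⟩, hl0.symm⟩
  | 2, hn, ih, hcard =>
    refine ⟨fun _ => [], fun T => rfl, ?_, ?_, ?_⟩
    · intro T v
      simp only [List.not_mem_nil, false_iff]
      have := deg_le_one_of_card_two hcard T.1 v
      omega
    · intro T₁ T₂ _
      exact Subtype.ext (tree_unique_of_card_two hcard T₁.2 T₂.2)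
    · intro l hl
      have hl0 : l = [] := List.eq_nil_of_length_eq_zero (by simpa using hl)
      exact ⟨⟨⊤, top_isTree_of_card_two hcard⟩, hl0.symm⟩
  | (k+3), hn, ih, hcard =>
    have hV2 : 2 ≤ Fintype.card V := by omega
    have hcard' : ∀ ℓ : V, Fintype.card {x : V // x ≠ ℓ} = k + 2 := by
      intro ℓ
      have : Fintype.card {x : V // ¬ x = ℓ} = Fintype.card V - Fintype.card {x : V // x = ℓ} :=
        Fintype.card_subtype_compl _
      rw [Fintype.card_subtype_eq ℓ] at this
      rw [this, hcard]
      omega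
    have hIH : ∀ ℓ : V, ∃ f : {G : SimpleGraph {x : V // x ≠ ℓ} // G.IsTree} →
        List {x : V // x ≠ ℓ},
        (∀ T, (f T).length = (k+2) - 2) ∧
        (∀ T v, v ∈ f T ↔ 2 ≤ deg T.1 v) ∧
        Function.Injective f ∧
        (∀ l, l.length = (k+2) - 2 → ∃ T, f T = l) :=
      fun ℓ => ih (k+2) (by omega) (by omega) _ (hcard' ℓ)
    choose f hflen hfkey hfinj hfsurj using hIH
    have hdecomp : ∀ T : {G : SimpleGraph V // G.IsTree}, ∃ (ℓ : V) (a : {x : V // x ≠ ℓ})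
        (X : {G' : SimpleGraph {x : V // x ≠ ℓ} // G'.IsTree}),
        T.1 = addLeaf ℓ a X.1 ∧ deg T.1 ℓ = 1 ∧ (∀ v, deg T.1 v = 1 → ℓ ≤ v) := by
      intro T
      have hex := exists_leaf T.2 hV2
      have hsne : (Finset.univ.filter (fun v => deg T.1 v = 1)).Nonempty := by
        obtain ⟨v, hv⟩ := hex; exact ⟨v, by simp [hv]⟩
      have hℓleaf : deg T.1 ((Finset.univ.filter (fun v => deg T.1 v = 1)).min' hsne) = 1 := by
        have := Finset.min'_mem _ hsne
        simpa using this
      obtain ⟨a, ha⟩ := exists_unique_nbr hℓleaf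
      exact ⟨_, a, ⟨delVert T.1 _, delVert_isTree T.2 ha⟩, eq_addLeaf ha, hℓleaf,
        fun v hv => Finset.min'_le _ v (by simp [hv])⟩
    choose ℓc ac Xc hrec hleafc hminc using hdecomp
    have hdegX : ∀ (ℓ : V) (X : {G' : SimpleGraph {x : V // x ≠ ℓ} // G'.IsTree}) v,
        1 ≤ deg X.1 v :=
      fun ℓ X v => one_le_deg X.2.isConnected (by rw [hcard' ℓ]; omega) v
    set F : {G : SimpleGraph V // G.IsTree} → List V :=
      fun T => (ac T).1 :: (f (ℓc T) (Xc T)).map Subtype.val with hFdef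
    have hFkey : ∀ T v, v ∈ F T ↔ 2 ≤ deg T.1 v := by
      intro T v
      simp only [hFdef, List.mem_cons, List.mem_map]
      by_cases hvℓ : v = ℓc T
      · have hd : deg T.1 v = 1 := by rw [hvℓ]; exact hleafc T
        rw [hd]
        simp only [show ¬ (2 ≤ 1) by omega, iff_false]
        rintro (h1 | ⟨x, -, h2⟩)
        · exact (ac T).2 (h1.symm.trans hvℓ)
        · exact x.2 (h2.trans hvℓ)
      · by_cases hva : v = (ac T).1
        · rw [hrec T, hva, deg_addLeaf_a]
          have := hdegX (ℓc T) (Xc T) (ac T)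
          exact iff_of_true (Or.inl rfl) (by omega)
        · rw [hrec T, deg_addLeaf_of_ne_of_ne hvℓ hva]
          rw [← hfkey (ℓc T) (Xc T) ⟨v, hvℓ⟩]
          constructor
          · rintro (h1 | ⟨x, hx, h2⟩)
            · exact absurd h1 hva
            · have hxv : (⟨v, hvℓ⟩ : {x : V // x ≠ ℓc T}) = x := Subtype.ext h2.symm
              rw [hxv]
              exact hx
          · intro hmem
            exact Or.inr ⟨⟨v, hvℓ⟩, hmem, rfl⟩
    refine ⟨F, ?hlen, hFkey, ?hinj, ?hsurj⟩
    case hlen =>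
      intro T
      simp [hFdef, hflen (ℓc T) (Xc T)]
    case hinj =>
      have hcong2 : ∀ (ℓ₁ ℓ₂ : V), ℓ₁ = ℓ₂ → ∀ (a₁ : {x : V // x ≠ ℓ₁}) (a₂ : {x : V // x ≠ ℓ₂})
          (X₁ : {G' : SimpleGraph {x : V // x ≠ ℓ₁} // G'.IsTree})
          (X₂ : {G' : SimpleGraph {x : V // x ≠ ℓ₂} // G'.IsTree}),
          a₁.1 :: (f ℓ₁ X₁).map Subtype.val = a₂.1 :: (f ℓ₂ X₂).map Subtype.val →
          addLeaf ℓ₁ a₁ X₁.1 = addLeaf ℓ₂ a₂ X₂.1 := by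
        rintro ℓ ℓ₂ rfl a₁ a₂ X₁ X₂ heq
        rw [List.cons_eq_cons] at heq
        have ha : a₁ = a₂ := Subtype.ext heq.1
        have hfeq : f ℓ X₁ = f ℓ X₂ :=
          List.map_injective_iff.mpr Subtype.val_injective heq.2
        have hX : X₁ = X₂ := hfinj ℓ hfeq
        rw [ha, hX]
      intro T₁ T₂ hFeq
      have hdegiff : ∀ v, 2 ≤ deg T₁.1 v ↔ 2 ≤ deg T₂.1 v := by
        intro v
        rw [← hFkey T₁ v, ← hFkey T₂ v, hFeq]
      have hdeg1 : ∀ v, deg T₁.1 v = 1 ↔ deg T₂.1 v = 1 := by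
        intro v
        have h₁ := one_le_deg T₁.2.isConnected hV2 v
        have h₂ := one_le_deg T₂.2.isConnected hV2 v
        have := hdegiff v
        omega
      have hℓ : ℓc T₁ = ℓc T₂ := le_antisymm
        (hminc T₁ _ ((hdeg1 _).mpr (hleafc T₂)))
        (hminc T₂ _ ((hdeg1 _).mp (hleafc T₁)))
      apply Subtype.ext
      rw [hrec T₁, hrec T₂]
      have hF2 := hFeq
      simp only [hFdef] at hF2
      exact hcong2 _ _ hℓ _ _ _ _ hF2
    case hsurj =>
      have hcong : ∀ (ℓ₁ ℓ₂ : V), ℓ₁ = ℓ₂ → ∀ (a₁ : {x : V // x ≠ ℓ₁}) (a₂ : {x : V // x ≠ ℓ₂})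
          (X₁ : {G' : SimpleGraph {x : V // x ≠ ℓ₁} // G'.IsTree})
          (X₂ : {G' : SimpleGraph {x : V // x ≠ ℓ₂} // G'.IsTree}),
          addLeaf ℓ₁ a₁ X₁.1 = addLeaf ℓ₂ a₂ X₂.1 →
          a₁.1 :: (f ℓ₁ X₁).map Subtype.val = a₂.1 :: (f ℓ₂ X₂).map Subtype.val := by
        rintro ℓ ℓ₂ rfl a₁ a₂ X₁ X₂ heq
        have ha : a₁ = a₂ := by
          have h1 : (addLeaf ℓ a₁ X₁.1).Adj ℓ a₁.1 := addLeaf_adj_ell.mpr rfl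
          rw [heq] at h1
          exact Subtype.ext (addLeaf_adj_ell.mp h1)
        have hX : X₁ = X₂ := by
          apply Subtype.ext
          have h2 := congrArg (fun G => delVert G ℓ) heq
          simpa using h2
        rw [ha, hX]
      intro l hl
      obtain ⟨b, t, rfl⟩ : ∃ b t, l = b :: t := by
        cases l with
        | nil => simp at hl
        | cons b t => exact ⟨b, t, rfl⟩
      have hlt : t.length = k := by simpa using hl
      have hs2ne : (Finset.univ.filter (fun v : V => v ∉ b :: t)).Nonempty := by
        by_contra hemp
        rw [Finset.not_nonempty_iff_eq_empty, Finset.filter_eq_empty_iff] at hemp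
        have hsub : (Finset.univ : Finset V) ⊆ (b :: t).toFinset := by
          intro v _
          have := hemp (Finset.mem_univ v)
          rw [not_not] at this
          simpa using this
        have h1 := Finset.card_le_card hsub
        have h2 := (b :: t).toFinset_card_le
        simp only [Finset.card_univ, hcard] at h1
        rw [List.length_cons, hlt] at h2
        omega
      set ℓ := (Finset.univ.filter (fun v : V => v ∉ b :: t)).min' hs2ne with hℓdef
      have hℓnot : ℓ ∉ b :: t := by
        have := Finset.min'_mem _ hs2ne
        simpa [hℓdef] using this
      have hb : b ≠ ℓ := fun h => hℓnot (h ▸ (List.mem_cons_self (a := b) (l := t)))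
      have htmem : ∀ x ∈ t, x ≠ ℓ := fun x hx hh => hℓnot (hh ▸ List.mem_cons_of_mem _ hx)
      set t' : List {x : V // x ≠ ℓ} := t.pmap (fun x hx => ⟨x, hx⟩) htmem with ht'
      have ht'map : t'.map Subtype.val = t := by
        rw [ht', List.map_pmap]
        simp
      have ht'len : t'.length = (k + 2) - 2 := by
        rw [ht', List.length_pmap, hlt]
        omega
      obtain ⟨X, hX⟩ := hfsurj ℓ t' ht'len
      refine ⟨⟨addLeaf ℓ ⟨b, hb⟩ X.1, addLeaf_isTree X.2⟩, ?_⟩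
      set T : {G : SimpleGraph V // G.IsTree} := ⟨addLeaf ℓ ⟨b, hb⟩ X.1, addLeaf_isTree X.2⟩
        with hT
      have hTℓdeg : deg T.1 ℓ = 1 := deg_addLeaf_ell
      have h1 : ℓc T ≤ ℓ := hminc T ℓ hTℓdeg
      have h2 : ℓ ≤ ℓc T := by
        apply Finset.min'_le
        simp only [Finset.mem_filter, Finset.mem_univ, true_and]
        by_cases hℓℓ : ℓc T = ℓ
        · rw [hℓℓ]; exact hℓnot
        · have hdegc := hleafc T
          intro hmemc
          rcases List.mem_cons.mp hmemc with hcb | hct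
          · -- ℓc T = b, so deg T.1 b = 1, but deg = deg X b + 1 ≥ 2
            have : deg T.1 b = deg X.1 ⟨b, hb⟩ + 1 := by
              have := deg_addLeaf_a (ℓ := ℓ) (a := ⟨b, hb⟩) (G' := X.1)
              exact this
            rw [hcb] at hdegc
            have := hdegX ℓ X ⟨b, hb⟩
            omega
          · -- ℓc T ∈ t
            by_cases hcb2 : ℓc T = b
            · have : deg T.1 b = deg X.1 ⟨b, hb⟩ + 1 := deg_addLeaf_a
              rw [hcb2] at hdegc
              have := hdegX ℓ X ⟨b, hb⟩
              omega
            · have hmem' : (⟨ℓc T, hℓℓ⟩ : {x : V // x ≠ ℓ}) ∈ t' := by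
                rw [ht']
                exact List.mem_pmap.mpr ⟨ℓc T, hct, rfl⟩
              rw [← hX] at hmem'
              have h2le := (hfkey ℓ X ⟨ℓc T, hℓℓ⟩).mp hmem'
              have : deg T.1 (ℓc T) = deg X.1 ⟨ℓc T, hℓℓ⟩ :=
                deg_addLeaf_of_ne_of_ne hℓℓ hcb2
              omega
      have hℓeq : ℓc T = ℓ := le_antisymm h1 h2
      have hfin := hcong (ℓc T) ℓ hℓeq (ac T) ⟨b, hb⟩ (Xc T) X ((hrec T).symm.trans rfl)
      show F T = b :: t
      simp only [hFdef]
      rw [hfin, hX, ht'map]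

end main
end Cayley

/-- Cayley's formula: the number of labeled trees on `n ≥ 1` vertices is `n^(n-2)`. -/
theorem cayley_formula (n : ℕ) (hn : 1 ≤ n) :
    Nat.card {G : SimpleGraph (Fin n) // G.IsTree} = n ^ (n - 2) := by
  obtain ⟨f, hlen, -, hinj, hsurj⟩ :=
    Cayley.pruefer_count n hn (Fin n) (Fintype.card_fin n)
  have hbij : Function.Bijective
      (fun T : {G : SimpleGraph (Fin n) // G.IsTree} =>
        (⟨f T, hlen T⟩ : List.Vector (Fin n) (n - 2))) := by
    constructor
    · intro T₁ T₂ h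
      exact hinj (congrArg Subtype.val h)
    · rintro ⟨l, hl⟩
      obtain ⟨T, hT⟩ := hsurj l hl
      exact ⟨T, Subtype.ext hT⟩
  have hv : Nat.card (List.Vector (Fin n) (n - 2)) = n ^ (n - 2) := by
    rw [Nat.card_eq_fintype_card, card_vector, Fintype.card_fin]
  rw [Nat.card_eq_of_bijective _ hbij]
  exact hv
end

section
/- The number of labeled bipartite-oriented trees with p sources and q sinks, with the set of sources and sinks specified, and every edge going from a source to a sink, equals p^{q−1} q^{p−1}. -/
open Function

namespace BipProof

noncomputable section
open scoped Classical


/-! ### Generic orbit lemmas -/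

section orbit
variable {α : Type*} (f : α → α)

/-- periodic points -/
def per : Set α := {v | ∃ n, 0 < n ∧ f^[n] v = v}

variable {f}

lemma per_apply {v : α} (hv : v ∈ per f) : f v ∈ per f := by
  obtain ⟨n, hn, hfn⟩ := hv
  exact ⟨n, hn, by rw [← Function.iterate_succ_apply, Function.iterate_succ_apply', hfn]⟩

lemma per_iterate {v : α} (hv : v ∈ per f) (k : ℕ) : f^[k] v ∈ per f := by
  induction k with
  | zero => exact hv
  | succ k ih => rw [Function.iterate_succ_apply']; exact per_apply ih

lemma per_mul {v : α} {n : ℕ} (hv : f^[n] v = v) (k : ℕ) : f^[n * k] v = v := by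
  induction k with
  | zero => simp
  | succ k ih => rw [Nat.mul_succ, Function.iterate_add_apply, hv, ih]

lemma per_injOn : Set.InjOn f (per f) := by
  rintro v ⟨n, hn, hfn⟩ w ⟨m, hm, hfm⟩ h
  have hv : f^[n * m] v = v := per_mul hfn m
  have hw : f^[n * m] w = w := by rw [mul_comm]; exact per_mul hfm n
  have hnm : 0 < n * m := Nat.mul_pos hn hm
  calc v = f^[n * m] v := hv.symm
    _ = f^[n * m - 1] (f v) := by rw [← Function.iterate_succ_apply]; congr 1; omega
    _ = f^[n * m - 1] (f w) := by rw [h]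
    _ = f^[n * m] w := by rw [← Function.iterate_succ_apply]; congr 1; omega
    _ = w := hw

lemma exists_iterate_mem_per [Finite α] (v : α) : ∃ n, f^[n] v ∈ per f := by
  obtain ⟨i, j, hij, h⟩ := Finite.exists_ne_map_eq_of_infinite (fun n : ℕ => f^[n] v)
  rcases Nat.lt_or_ge i j with hlt | hge
  · exact ⟨i, j - i, by omega, by rw [← Function.iterate_add_apply]; rw [show j - i + i = j by omega]; exact h.symm⟩
  · have hlt : j < i := by omega
    exact ⟨j, i - j, by omega, by rw [← Function.iterate_add_apply]; rw [show i - j + j = i by omega]; exact h⟩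

/-- if `c` is invariant and `f` is injective on `c`, then all of `c` is periodic -/
lemma mem_per_of_invariant [Finite α] {c : Set α} (hinv : ∀ v ∈ c, f v ∈ c)
    (hinj : Set.InjOn f c) {v : α} (hv : v ∈ c) : v ∈ per f := by
  have hiter : ∀ n, f^[n] v ∈ c := by
    intro n; induction n with
    | zero => exact hv
    | succ n ih => rw [Function.iterate_succ_apply']; exact hinv _ ih
  obtain ⟨i, j, hij, h⟩ := Finite.exists_ne_map_eq_of_infinite (fun n : ℕ => f^[n] v)
  wlog hlt : i < j generalizing i j
  · exact this j i hij.symm h.symm (by omega)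
  -- cancel i applications
  have key : ∀ i j : ℕ, f^[i] v = f^[j] v → i < j → f^[j - i] v = v := by
    intro i j h hlt
    induction i generalizing j with
    | zero => simpa using h.symm
    | succ i ih =>
      rcases j with _ | j
      · omega
      · have h' : f^[i] v = f^[j] v := by
          apply hinj (hiter i) (hiter j)
          rw [Function.iterate_succ_apply', Function.iterate_succ_apply'] at h
          exact h
        rw [show j + 1 - (i+1) = j - i by omega]
        exact ih j h' (by omega)
  exact ⟨j - i, by omega, key i j h hlt⟩

/-- if `c` is invariant, `v ∉ c` but the orbit of `v` enters `c`, then `v` is not periodic -/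
lemma not_per_of_enters [Finite α] {c : Set α} (hinv : ∀ v ∈ c, f v ∈ c)
    {v : α} (hv : v ∉ c) {m : ℕ} (hm : f^[m] v ∈ c) : v ∉ per f := by
  rintro ⟨n, hn, hfn⟩
  have hiterc : ∀ k, f^[m + k] v ∈ c := by
    intro k; induction k with
    | zero => simpa using hm
    | succ k ih => rw [← Nat.add_assoc, Function.iterate_succ_apply']; exact hinv _ ih
  apply hv
  have h1 : f^[n * (m + 1)] v = v := per_mul hfn (m + 1)
  have h2 : n * (m + 1) ≥ m := by nlinarith
  have : f^[m + (n * (m+1) - m)] v ∈ c := hiterc _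
  rw [show m + (n * (m+1) - m) = n * (m+1) by omega, h1] at this
  exact this

lemma iterate_fixed_pt {r : α} (hr : f r = r) (n : ℕ) : f^[n] r = r :=
  Function.iterate_fixed hr n

end orbit

section
variable (P Q : ℕ)

abbrev V := Fin (P + 1) ⊕ Fin (Q + 1)

def rt : V P Q := Sum.inl 0

def Bip (f : V P Q → V P Q) : Prop :=
  f (rt P Q) = rt P Q ∧
  (∀ a : Fin (P+1), a ≠ 0 → ∃ b, f (Sum.inl a) = Sum.inr b) ∧
  (∀ b : Fin (Q+1), ∃ a, f (Sum.inr b) = Sum.inl a)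

def FF : Type := {f : V P Q → V P Q // Bip P Q f ∧ ∀ v, ∃ n, f^[n] v = rt P Q}

def GG : Type := {f : V P Q → V P Q // Bip P Q f}

instance : Finite (GG P Q) := by unfold GG; infer_instance
instance : Finite (FF P Q) := by unfold FF; infer_instance

def mkG : ((Fin (Q+1) → Fin (P+1)) × ({a : Fin (P+1) // a ≠ 0} → Fin (Q+1))) → (V P Q → V P Q) :=
  fun gh v => match v with
  | Sum.inl a => if h : a = 0 then Sum.inl 0 else Sum.inr (gh.2 ⟨a, h⟩)
  | Sum.inr b => Sum.inl (gh.1 b)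

lemma mkG_bip (gh) : Bip P Q (mkG P Q gh) := by
  refine ⟨by simp [mkG, rt], fun a ha => ⟨gh.2 ⟨a, ha⟩, by simp [mkG, ha]⟩,
    fun b => ⟨gh.1 b, rfl⟩⟩

lemma mkG_bijective : Function.Bijective (fun gh => (⟨mkG P Q gh, mkG_bip P Q gh⟩ : GG P Q)) := by
  constructor
  · rintro ⟨g, h⟩ ⟨g', h'⟩ he
    simp only [Subtype.mk.injEq] at he
    have h1 : ∀ b, Sum.inl (α := Fin (P+1)) (β := Fin (Q+1)) (g b) = Sum.inl (g' b) := by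
      intro b; exact congrFun he (Sum.inr b)
    have h2 : ∀ a : {a : Fin (P+1) // a ≠ 0},
        Sum.inr (α := Fin (P+1)) (β := Fin (Q+1)) (h a) = Sum.inr (h' a) := by
      rintro ⟨a, ha⟩
      have := congrFun he (Sum.inl a)
      simpa [mkG, ha] using this
    refine Prod.ext ?_ ?_
    · funext b; exact Sum.inl.inj (h1 b)
    · funext a; exact Sum.inr.inj (h2 a)
  · rintro ⟨f, hf0, hf1, hf2⟩
    refine ⟨⟨fun b => (hf2 b).choose, fun a => (hf1 a.1 a.2).choose⟩, ?_⟩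
    ext v
    simp only [mkG]
    match v with
    | Sum.inl a =>
      by_cases ha : a = 0
      · subst ha
        simpa [mkG, rt] using hf0.symm
      · simpa [mkG, ha] using ((hf1 a ha).choose_spec).symm
    | Sum.inr b => simpa [mkG] using ((hf2 b).choose_spec).symm

lemma card_GG : Nat.card (GG P Q) = (P+1)^(Q+1) * (Q+1)^P := by
  rw [GG, ← Nat.card_eq_of_bijective _ (mkG_bijective P Q)]
  rw [Nat.card_prod, Nat.card_fun, Nat.card_fun]
  have h1 : Nat.card {a : Fin (P+1) // a ≠ 0} = P := by
    rw [Nat.card_eq_fintype_card, Fintype.card_subtype_compl, Fintype.card_fin,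
      Fintype.card_subtype_eq]
    omega
  rw [h1]
  simp [Nat.card_eq_fintype_card]

end

section Fibers
variable (P Q : ℕ) (c : Set (V P Q))

def Sc : Type := {a : Fin (P+1) // a ≠ 0 ∧ Sum.inl a ∈ c}
def Tc : Type := {b : Fin (Q+1) // Sum.inr b ∈ c}
def Wc : Type := {w : V P Q → V P Q //
  (∀ v ∈ c, w v = v) ∧
  (∀ a : Fin (P+1), Sum.inl a ∉ c → ∃ b, w (Sum.inl a) = Sum.inr b) ∧
  (∀ b : Fin (Q+1), Sum.inr b ∉ c → ∃ a, w (Sum.inr b) = Sum.inl a) ∧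
  (∀ v, ∃ n, w^[n] v ∈ c)}

instance : Finite (Sc P Q c) := by unfold Sc; infer_instance
instance : Finite (Tc P Q c) := by unfold Tc; infer_instance
instance : Finite (Wc P Q c) := by unfold Wc; infer_instance

variable {P Q c}

/-- transfer of "eventually enters c" between functions agreeing off `c` -/
lemma enters_of_agree {α : Type*} {f w : α → α} {c : Set α}
    (hagree : ∀ v ∉ c, f v = w v) {v : α} {n : ℕ} (h : w^[n] v ∈ c) :
    ∃ m, f^[m] v ∈ c := by
  induction n generalizing v with
  | zero => exact ⟨0, h⟩
  | succ n ih =>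
    by_cases hv : v ∈ c
    · exact ⟨0, hv⟩
    · rw [Function.iterate_succ_apply] at h
      obtain ⟨m, hm⟩ := ih (v := w v) h
      exact ⟨m + 1, by rw [Function.iterate_succ_apply, hagree v hv]; exact hm⟩

def glueG (e : Tc P Q c ≃ Sc P Q c) (e' : Sc P Q c ≃ Tc P Q c) (w : Wc P Q c) :
    V P Q → V P Q := fun v => match v with
  | Sum.inl a => if h : a ≠ 0 ∧ Sum.inl a ∈ c then Sum.inr (e' ⟨a, h⟩).1
      else if Sum.inl a ∈ c then Sum.inl 0 else w.1 (Sum.inl a)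
  | Sum.inr b => if h : Sum.inr b ∈ c then Sum.inl (e ⟨b, h⟩).1 else w.1 (Sum.inr b)

variable (e : Tc P Q c ≃ Sc P Q c) (e' : Sc P Q c ≃ Tc P Q c) (w : Wc P Q c)

lemma glueG_inl_mem {a : Fin (P+1)} (h : a ≠ 0) (h2 : Sum.inl a ∈ c) :
    glueG e e' w (Sum.inl a) = Sum.inr (e' ⟨a, h, h2⟩).1 := by
  simp [glueG, h, h2]

lemma glueG_root (hr : rt P Q ∈ c) : glueG e e' w (rt P Q) = rt P Q := by
  simp only [rt, glueG]
  rw [dif_neg (by simp), if_pos (show (Sum.inl 0 : V P Q) ∈ c from hr)]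

lemma glueG_inr_mem {b : Fin (Q+1)} (h : Sum.inr b ∈ c) :
    glueG e e' w (Sum.inr b) = Sum.inl (e ⟨b, h⟩).1 := by
  simp [glueG, h]

lemma glueG_not_mem {v : V P Q} (h : v ∉ c) : glueG e e' w v = w.1 v := by
  match v with
  | Sum.inl a =>
    have : ¬ (a ≠ 0 ∧ Sum.inl a ∈ c) := by tauto
    simp only [glueG]
    rw [dif_neg this, if_neg h]
  | Sum.inr b => simp only [glueG]; rw [dif_neg h]

lemma glueG_maps (hr : rt P Q ∈ c) : ∀ v ∈ c, glueG e e' w v ∈ c := by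
  intro v hv
  match v with
  | Sum.inl a =>
    by_cases ha : a = 0
    · subst ha; rw [show (Sum.inl 0 : V P Q) = rt P Q from rfl, glueG_root e e' w hr]; exact hr
    · rw [glueG_inl_mem e e' w ha hv]; exact (e' ⟨a, ha, hv⟩).2
  | Sum.inr b =>
    rw [glueG_inr_mem e e' w hv]; exact (e ⟨b, hv⟩).2.2

lemma glueG_injOn (hr : rt P Q ∈ c) : Set.InjOn (glueG e e' w) c := by
  intro x hx y hy hxy
  match x, y with
  | Sum.inl a, Sum.inl a' =>
    by_cases ha : a = 0 <;> by_cases ha' : a' = 0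
    · rw [ha, ha']
    · rw [ha] at hxy ⊢
      rw [show (Sum.inl 0 : V P Q) = rt P Q from rfl, glueG_root e e' w hr,
        glueG_inl_mem e e' w ha' hy] at hxy
      exact absurd hxy (by simp [rt])
    · rw [ha'] at hxy ⊢
      rw [show (Sum.inl 0 : V P Q) = rt P Q from rfl, glueG_root e e' w hr,
        glueG_inl_mem e e' w ha hx] at hxy
      exact absurd hxy (by simp [rt])
    · rw [glueG_inl_mem e e' w ha hx, glueG_inl_mem e e' w ha' hy] at hxy
      have := e'.injective (Subtype.ext (Sum.inr.inj hxy))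
      exact congrArg Sum.inl (congrArg Subtype.val this)
  | Sum.inl a, Sum.inr b =>
    exfalso
    rw [glueG_inr_mem e e' w hy] at hxy
    by_cases ha : a = 0
    · rw [ha] at hxy
      rw [show (Sum.inl 0 : V P Q) = rt P Q from rfl, glueG_root e e' w hr] at hxy
      have h0 := (e ⟨b, hy⟩).2.1
      exact h0 (by simpa [rt] using hxy.symm)
    · rw [glueG_inl_mem e e' w ha hx] at hxy
      simp at hxy
  | Sum.inr b, Sum.inl a =>
    exfalso
    rw [glueG_inr_mem e e' w hx] at hxy
    by_cases ha : a = 0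
    · rw [ha] at hxy
      rw [show (Sum.inl 0 : V P Q) = rt P Q from rfl, glueG_root e e' w hr] at hxy
      have h0 := (e ⟨b, hx⟩).2.1
      exact h0 (by simpa [rt] using hxy)
    · rw [glueG_inl_mem e e' w ha hy] at hxy
      simp at hxy
  | Sum.inr b, Sum.inr b' =>
    rw [glueG_inr_mem e e' w hx, glueG_inr_mem e e' w hy] at hxy
    have := e.injective (Subtype.ext (Sum.inl.inj hxy))
    exact congrArg Sum.inr (congrArg Subtype.val this)

lemma glueG_bip (hr : rt P Q ∈ c) : Bip P Q (glueG e e' w) := by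
  refine ⟨glueG_root e e' w hr, ?_, ?_⟩
  · intro a ha
    by_cases hc : Sum.inl a ∈ c
    · exact ⟨(e' ⟨a, ha, hc⟩).1, glueG_inl_mem e e' w ha hc⟩
    · obtain ⟨b, hb⟩ := w.2.2.1 a hc
      exact ⟨b, by rw [glueG_not_mem e e' w hc]; exact hb⟩
  · intro b
    by_cases hc : Sum.inr b ∈ c
    · exact ⟨(e ⟨b, hc⟩).1, glueG_inr_mem e e' w hc⟩
    · obtain ⟨a, ha⟩ := w.2.2.2.1 b hc
      exact ⟨a, by rw [glueG_not_mem e e' w hc]; exact ha⟩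

lemma glueG_per (hr : rt P Q ∈ c) : per (glueG e e' w) = c := by
  apply Set.Subset.antisymm
  · intro v hv
    by_contra hvc
    obtain ⟨n, hn⟩ := w.2.2.2.2 v
    obtain ⟨m, hm⟩ := enters_of_agree (fun u hu => glueG_not_mem e e' w hu) hn
    exact not_per_of_enters (glueG_maps e e' w hr) hvc hm hv
  · intro v hv
    exact mem_per_of_invariant (glueG_maps e e' w hr) (glueG_injOn e e' w hr) hv

def fiberG (c : Set (V P Q)) : Type := {f : GG P Q // per f.1 = c}

instance : Finite (fiberG (P := P) (Q := Q) c) := by unfold fiberG; infer_instance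

def GammaG (hr : rt P Q ∈ c) :
    ((Tc P Q c ≃ Sc P Q c) × (Sc P Q c ≃ Tc P Q c)) × Wc P Q c → fiberG c :=
  fun x => ⟨⟨glueG x.1.1 x.1.2 x.2, glueG_bip x.1.1 x.1.2 x.2 hr⟩, glueG_per x.1.1 x.1.2 x.2 hr⟩

lemma GammaG_bijective (hr : rt P Q ∈ c) : Function.Bijective (GammaG (c := c) hr) := by
  constructor
  · rintro ⟨⟨e, e'⟩, w⟩ ⟨⟨d, d'⟩, w'⟩ hg
    have hg : glueG e e' w = glueG d d' w' := congrArg (fun z => z.1.1) hg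
    have he : e = d := by
      apply Equiv.ext; rintro ⟨b, hb⟩
      have := congrFun hg (Sum.inr b)
      rw [glueG_inr_mem e e' w hb, glueG_inr_mem d d' w' hb] at this
      exact Subtype.ext (Sum.inl.inj this)
    have he' : e' = d' := by
      apply Equiv.ext; rintro ⟨a, ha, hac⟩
      have := congrFun hg (Sum.inl a)
      rw [glueG_inl_mem e e' w ha hac, glueG_inl_mem d d' w' ha hac] at this
      exact Subtype.ext (Sum.inr.inj this)
    have hw : w = w' := by
      apply Subtype.ext; funext v
      by_cases hv : v ∈ c
      · rw [w.2.1 v hv, w'.2.1 v hv]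
      · have := congrFun hg v
        rw [glueG_not_mem e e' w hv, glueG_not_mem d d' w' hv] at this
        exact this
    rw [he, he', hw]
  · rintro ⟨⟨f, hbip⟩, hper⟩
    replace hper : per f = c := hper
    -- basic facts about f
    have hroot : f (rt P Q) = rt P Q := hbip.1
    have hper_pre_root : ∀ t : V P Q, t ∈ per f → f t = rt P Q → t = rt P Q := by
      rintro t ⟨n, hn, hfn⟩ hft
      calc t = f^[n] t := hfn.symm
        _ = f^[n-1] (f t) := by rw [← Function.iterate_succ_apply]; congr 1; omega
        _ = rt P Q := by rw [hft]; exact iterate_fixed_pt hroot _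
    -- the `Tc → Sc` map
    have hTS : ∀ b : Fin (Q+1), Sum.inr b ∈ c →
        ∃ a : Fin (P+1), a ≠ 0 ∧ Sum.inl a ∈ c ∧ f (Sum.inr b) = Sum.inl a := by
      intro b hb
      obtain ⟨a, hab⟩ := hbip.2.2 b
      have hmem : Sum.inl a ∈ c := by
        rw [← hper, ← hab]; exact per_apply (by rw [hper]; exact hb)
      refine ⟨a, ?_, hmem, hab⟩
      intro ha0
      have : (Sum.inr b : V P Q) = rt P Q := by
        apply hper_pre_root _ (by rw [hper]; exact hb)
        rw [hab, ha0]; rfl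
      simp [rt] at this
    have hST : ∀ a : Fin (P+1), a ≠ 0 → Sum.inl a ∈ c →
        ∃ b : Fin (Q+1), Sum.inr b ∈ c ∧ f (Sum.inl a) = Sum.inr b := by
      intro a ha hac
      obtain ⟨b, hab⟩ := hbip.2.1 a ha
      have hmem : Sum.inr b ∈ c := by
        rw [← hper, ← hab]; exact per_apply (by rw [hper]; exact hac)
      exact ⟨b, hmem, hab⟩
    -- preimages within the periodic part
    have hpre : ∀ v : V P Q, v ∈ c → ∃ u : V P Q, u ∈ c ∧ f u = v := by
      intro v hv
      rw [← hper] at hv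
      obtain ⟨n, hn, hfn⟩ := id hv
      refine ⟨f^[n-1] v, by rw [← hper]; exact per_iterate hv _, ?_⟩
      have h1 := Function.iterate_succ_apply' f (n-1) v
      rw [show (n - 1).succ = n by omega] at h1
      rw [← h1]; exact hfn
    have hrc : rt P Q ∈ c := by
      rw [← hper]; exact ⟨1, Nat.one_pos, by simpa using hroot⟩
    -- construct the equivalences
    have injf : Set.InjOn f c := by rw [← hper]; exact per_injOn
    let tS : Tc P Q c → Sc P Q c := fun x =>
      ⟨(hTS x.1 x.2).choose, (hTS x.1 x.2).choose_spec.1, (hTS x.1 x.2).choose_spec.2.1⟩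
    have tS_spec : ∀ x : Tc P Q c, f (Sum.inr x.1) = Sum.inl (tS x).1 := fun x =>
      (hTS x.1 x.2).choose_spec.2.2
    have tS_bij : Function.Bijective tS := by
      constructor
      · intro x y hxy
        have : f (Sum.inr x.1) = f (Sum.inr y.1) := by
          rw [tS_spec x, tS_spec y, hxy]
        exact Subtype.ext (Sum.inr.inj (injf x.2 y.2 this))
      · rintro ⟨a, ha, hac⟩
        obtain ⟨u, huc, hu⟩ := hpre (Sum.inl a) hac
        match u with
        | Sum.inl a' =>
          exfalso
          by_cases ha' : a' = 0
          · rw [ha'] at hu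
            have : a = 0 := by
              have : (Sum.inl a : V P Q) = rt P Q := by rw [← hu]; exact hroot
              simpa [rt] using this
            exact ha this
          · obtain ⟨b', hb'⟩ := hbip.2.1 a' ha'
            rw [hb'] at hu; simp at hu
        | Sum.inr b =>
          refine ⟨⟨b, huc⟩, ?_⟩
          have := tS_spec ⟨b, huc⟩
          rw [hu] at this
          exact Subtype.ext (Sum.inl.inj this.symm)
    let sT : Sc P Q c → Tc P Q c := fun x =>
      ⟨(hST x.1 x.2.1 x.2.2).choose, (hST x.1 x.2.1 x.2.2).choose_spec.1⟩
    have sT_spec : ∀ x : Sc P Q c, f (Sum.inl x.1) = Sum.inr (sT x).1 := fun x =>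
      (hST x.1 x.2.1 x.2.2).choose_spec.2
    have sT_bij : Function.Bijective sT := by
      constructor
      · intro x y hxy
        have : f (Sum.inl x.1) = f (Sum.inl y.1) := by
          rw [sT_spec x, sT_spec y, hxy]
        exact Subtype.ext (Sum.inl.inj (injf x.2.2 y.2.2 this))
      · rintro ⟨b, hbc⟩
        obtain ⟨u, huc, hu⟩ := hpre (Sum.inr b) hbc
        match u with
        | Sum.inr b' =>
          exfalso
          obtain ⟨a', ha'⟩ := hbip.2.2 b'
          rw [ha'] at hu; simp at hu
        | Sum.inl a =>
          have ha : a ≠ 0 := by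
            intro h0
            rw [h0] at hu
            have : (Sum.inr b : V P Q) = rt P Q := by rw [← hu]; exact hroot
            simp [rt] at this
          refine ⟨⟨a, ha, huc⟩, ?_⟩
          have := sT_spec ⟨a, ha, huc⟩
          rw [hu] at this
          exact Subtype.ext (Sum.inr.inj this.symm)
    -- the outside function
    have hwmem : (∀ v ∈ c, (fun v => if v ∈ c then v else f v) v = v) ∧
        (∀ a : Fin (P+1), Sum.inl a ∉ c →
          ∃ b, (fun v => if v ∈ c then v else f v) (Sum.inl a) = Sum.inr b) ∧
        (∀ b : Fin (Q+1), Sum.inr b ∉ c →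
          ∃ a, (fun v => if v ∈ c then v else f v) (Sum.inr b) = Sum.inl a) ∧
        (∀ v, ∃ n, (fun v => if v ∈ c then v else f v)^[n] v ∈ c) := by
      refine ⟨fun v hv => if_pos hv, ?_, ?_, ?_⟩
      · intro a hac
        have ha : a ≠ 0 := by rintro rfl; exact hac hrc
        obtain ⟨b, hb⟩ := hbip.2.1 a ha
        exact ⟨b, by dsimp only; rw [if_neg hac]; exact hb⟩
      · intro b hbc
        obtain ⟨a, ha⟩ := hbip.2.2 b
        exact ⟨a, by dsimp only; rw [if_neg hbc]; exact ha⟩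
      · intro v
        obtain ⟨n, hn⟩ := exists_iterate_mem_per (f := f) v
        rw [hper] at hn
        exact enters_of_agree (fun u hu => if_neg hu) hn
    refine ⟨⟨⟨Equiv.ofBijective tS tS_bij, Equiv.ofBijective sT sT_bij⟩,
      ⟨fun v => if v ∈ c then v else f v, hwmem⟩⟩, ?_⟩
    apply Subtype.ext; apply Subtype.ext
    show glueG _ _ _ = f
    funext v
    match v with
    | Sum.inl a =>
      by_cases hac : Sum.inl a ∈ c
      · by_cases ha : a = 0
        · subst ha
          rw [show (Sum.inl 0 : V P Q) = rt P Q from rfl, glueG_root _ _ _ hrc, hroot]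
        · rw [glueG_inl_mem _ _ _ ha hac]
          exact (sT_spec ⟨a, ha, hac⟩).symm
      · rw [glueG_not_mem _ _ _ hac]
        show (if (Sum.inl a : V P Q) ∈ c then _ else f (Sum.inl a)) = f (Sum.inl a)
        rw [if_neg hac]
    | Sum.inr b =>
      by_cases hbc : Sum.inr b ∈ c
      · rw [glueG_inr_mem _ _ _ hbc]
        exact (tS_spec ⟨b, hbc⟩).symm
      · rw [glueG_not_mem _ _ _ hbc]
        show (if (Sum.inr b : V P Q) ∈ c then _ else f (Sum.inr b)) = f (Sum.inr b)
        rw [if_neg hbc]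

lemma card_fiberG (hr : rt P Q ∈ c) :
    Nat.card (fiberG (P := P) (Q := Q) c) =
      Nat.card (Tc P Q c ≃ Sc P Q c) * Nat.card (Sc P Q c ≃ Tc P Q c) * Nat.card (Wc P Q c) := by
  rw [← Nat.card_eq_of_bijective _ (GammaG_bijective hr), Nat.card_prod, Nat.card_prod, mul_assoc]

end Fibers

section FibersP
variable {P Q : ℕ} {c : Set (V P Q)} {k : ℕ}

def pathSet (x : Fin (P+1) × FF P Q) : Set (V P Q) :=
  Set.range (fun n : ℕ => (x.2.1)^[n] (Sum.inl x.1))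

def fiberP (c : Set (V P Q)) : Type := {x : Fin (P+1) × FF P Q // pathSet x = c}

instance : Finite (fiberP (P := P) (Q := Q) c) := by unfold fiberP; infer_instance

def glueP (u₁ : Fin k ≃ Sc P Q c) (u₂ : Fin k ≃ Tc P Q c) (w : Wc P Q c) :
    V P Q → V P Q := fun v => match v with
  | Sum.inl a => if h : a ≠ 0 ∧ Sum.inl a ∈ c then Sum.inr (u₂ (u₁.symm ⟨a, h⟩)).1
      else if Sum.inl a ∈ c then Sum.inl 0 else w.1 (Sum.inl a)
  | Sum.inr b => if h : Sum.inr b ∈ c then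
        (if h2 : ((u₂.symm ⟨b, h⟩ : Fin k) : ℕ) + 1 < k then
          Sum.inl (u₁ ⟨((u₂.symm ⟨b, h⟩ : Fin k) : ℕ) + 1, h2⟩).1 else Sum.inl 0)
      else w.1 (Sum.inr b)

variable (u₁ : Fin k ≃ Sc P Q c) (u₂ : Fin k ≃ Tc P Q c) (w : Wc P Q c)

def s0 (u₁ : Fin k ≃ Sc P Q c) : Fin (P+1) :=
  if h : 0 < k then (u₁ ⟨0, h⟩).1 else 0

lemma glueP_inl_mem {a : Fin (P+1)} (h : a ≠ 0) (h2 : Sum.inl a ∈ c) :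
    glueP u₁ u₂ w (Sum.inl a) = Sum.inr (u₂ (u₁.symm ⟨a, h, h2⟩)).1 := by
  simp [glueP, h, h2]

lemma glueP_root (hr : rt P Q ∈ c) : glueP u₁ u₂ w (rt P Q) = rt P Q := by
  simp only [rt, glueP]
  rw [dif_neg (by simp), if_pos (show (Sum.inl 0 : V P Q) ∈ c from hr)]

lemma glueP_inr_mem {b : Fin (Q+1)} (h : Sum.inr b ∈ c) :
    glueP u₁ u₂ w (Sum.inr b) =
      (if h2 : ((u₂.symm ⟨b, h⟩ : Fin k) : ℕ) + 1 < k then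
        Sum.inl (u₁ ⟨((u₂.symm ⟨b, h⟩ : Fin k) : ℕ) + 1, h2⟩).1 else Sum.inl 0) := by
  simp [glueP, h]

lemma glueP_not_mem {v : V P Q} (h : v ∉ c) : glueP u₁ u₂ w v = w.1 v := by
  match v with
  | Sum.inl a =>
    have : ¬ (a ≠ 0 ∧ Sum.inl a ∈ c) := by tauto
    simp only [glueP]
    rw [dif_neg this, if_neg h]
  | Sum.inr b => simp only [glueP]; rw [dif_neg h]

lemma glueP_src (i : Fin k) :
    glueP u₁ u₂ w (Sum.inl (u₁ i).1) = Sum.inr (u₂ i).1 := by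
  rw [glueP_inl_mem u₁ u₂ w (u₁ i).2.1 (u₁ i).2.2]
  congr 2
  rw [show (⟨(u₁ i).1, (u₁ i).2.1, (u₁ i).2.2⟩ : Sc P Q c) = u₁ i from Subtype.ext rfl,
    Equiv.symm_apply_apply]

lemma glueP_snk (i : Fin k) :
    glueP u₁ u₂ w (Sum.inr (u₂ i).1) =
      (if h2 : (i : ℕ) + 1 < k then Sum.inl (u₁ ⟨(i : ℕ) + 1, h2⟩).1 else Sum.inl 0) := by
  rw [glueP_inr_mem u₁ u₂ w (u₂ i).2]
  rw [show (⟨(u₂ i).1, (u₂ i).2⟩ : Tc P Q c) = u₂ i from Subtype.ext rfl,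
    Equiv.symm_apply_apply]

lemma glueP_orbit_even : ∀ i (hi : i < k),
    (glueP u₁ u₂ w)^[2*i] (Sum.inl (s0 u₁)) = Sum.inl (u₁ ⟨i, hi⟩).1 := by
  intro i
  induction i with
  | zero =>
    intro hi
    simp only [Nat.mul_zero, Function.iterate_zero, id]
    rw [s0, dif_pos (show 0 < k from hi)]
  | succ i ih =>
    intro hi
    have hi' : i < k := by omega
    have h1 : (glueP u₁ u₂ w)^[2*i+1] (Sum.inl (s0 u₁)) = Sum.inr (u₂ ⟨i, hi'⟩).1 := by
      rw [Function.iterate_succ_apply', ih hi', glueP_src]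
    have h2 : 2 * (i+1) = (2*i+1) + 1 := by ring
    rw [h2, Function.iterate_succ_apply', h1, glueP_snk]
    rw [dif_pos (show i + 1 < k from hi)]

lemma glueP_orbit_odd : ∀ i (hi : i < k),
    (glueP u₁ u₂ w)^[2*i+1] (Sum.inl (s0 u₁)) = Sum.inr (u₂ ⟨i, hi⟩).1 := by
  intro i hi
  rw [Function.iterate_succ_apply', glueP_orbit_even u₁ u₂ w i hi, glueP_src]

lemma glueP_final (hr : rt P Q ∈ c) :
    (glueP u₁ u₂ w)^[2*k] (Sum.inl (s0 u₁)) = rt P Q := by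
  rcases Nat.eq_zero_or_pos k with hk | hk
  · subst hk
    simp only [Nat.mul_zero, Function.iterate_zero, id]
    rw [s0, dif_neg (by omega)]
    rfl
  · have h1 : 2 * k = (2*(k-1)+1)+1 := by omega
    rw [h1, Function.iterate_succ_apply', glueP_orbit_odd u₁ u₂ w (k-1) (by omega), glueP_snk]
    rw [dif_neg (by simp only [Fin.val_mk]; omega)]
    rfl

lemma glueP_bip (hr : rt P Q ∈ c) : Bip P Q (glueP u₁ u₂ w) := by
  refine ⟨glueP_root u₁ u₂ w hr, ?_, ?_⟩
  · intro a ha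
    by_cases hc : Sum.inl a ∈ c
    · exact ⟨_, glueP_inl_mem u₁ u₂ w ha hc⟩
    · obtain ⟨b, hb⟩ := w.2.2.1 a hc
      exact ⟨b, by rw [glueP_not_mem u₁ u₂ w hc]; exact hb⟩
  · intro b
    by_cases hc : Sum.inr b ∈ c
    · rw [glueP_inr_mem u₁ u₂ w hc]
      by_cases h2 : ((u₂.symm ⟨b, hc⟩ : Fin k) : ℕ) + 1 < k
      · exact ⟨_, by rw [dif_pos h2]⟩
      · exact ⟨0, by rw [dif_neg h2]⟩
    · obtain ⟨a, ha⟩ := w.2.2.2.1 b hc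
      exact ⟨a, by rw [glueP_not_mem u₁ u₂ w hc]; exact ha⟩

/-- every vertex of `c` is on the orbit, with bounded time -/
lemma glueP_cover (hr : rt P Q ∈ c) {v : V P Q} (hv : v ∈ c) :
    ∃ m, m ≤ 2*k ∧ (glueP u₁ u₂ w)^[m] (Sum.inl (s0 u₁)) = v := by
  match v with
  | Sum.inl a =>
    by_cases ha : a = 0
    · subst ha
      exact ⟨2*k, le_refl _, glueP_final u₁ u₂ w hr⟩
    · obtain ⟨i, hi⟩ := u₁.surjective ⟨a, ha, hv⟩
      refine ⟨2*i.1, by omega, ?_⟩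
      rw [glueP_orbit_even u₁ u₂ w i.1 i.2]
      rw [show (⟨i.1, i.2⟩ : Fin k) = i from rfl, hi]
  | Sum.inr b =>
    obtain ⟨i, hi⟩ := u₂.surjective ⟨b, hv⟩
    refine ⟨2*i.1+1, by omega, ?_⟩
    rw [glueP_orbit_odd u₁ u₂ w i.1 i.2]
    rw [show (⟨i.1, i.2⟩ : Fin k) = i from rfl, hi]

lemma glueP_reach (hr : rt P Q ∈ c) : ∀ v, ∃ n, (glueP u₁ u₂ w)^[n] v = rt P Q := by
  have hreach_c : ∀ v ∈ c, ∃ n, (glueP u₁ u₂ w)^[n] v = rt P Q := by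
    intro v hv
    obtain ⟨m, hm, hv'⟩ := glueP_cover u₁ u₂ w hr hv
    refine ⟨2*k - m, ?_⟩
    rw [← hv', ← Function.iterate_add_apply, show 2*k - m + m = 2*k by omega]
    exact glueP_final u₁ u₂ w hr
  intro v
  by_cases hv : v ∈ c
  · exact hreach_c v hv
  · obtain ⟨n, hn⟩ := w.2.2.2.2 v
    obtain ⟨m, hm⟩ := enters_of_agree (fun u hu => glueP_not_mem u₁ u₂ w hu) hn
    obtain ⟨n', hn'⟩ := hreach_c _ hm
    exact ⟨n' + m, by rw [Function.iterate_add_apply, hn']⟩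

lemma glueP_pathSet (hr : rt P Q ∈ c) :
    pathSet (⟨s0 u₁, ⟨glueP u₁ u₂ w, glueP_bip u₁ u₂ w hr, glueP_reach u₁ u₂ w hr⟩⟩) = c := by
  apply Set.Subset.antisymm
  · rintro v ⟨n, rfl⟩
    show (glueP u₁ u₂ w)^[n] (Sum.inl (s0 u₁)) ∈ c
    by_cases hn : n < 2*k
    · rcases Nat.even_or_odd n with ⟨i, hi⟩ | ⟨i, hi⟩
      · rw [show n = 2*i by omega, glueP_orbit_even u₁ u₂ w i (by omega)]
        exact (u₁ _).2.2
      · rw [show n = 2*i+1 by omega, glueP_orbit_odd u₁ u₂ w i (by omega)]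
        exact (u₂ _).2
    · have : (glueP u₁ u₂ w)^[n] (Sum.inl (s0 u₁)) = rt P Q := by
        rw [show n = (n - 2*k) + 2*k by omega, Function.iterate_add_apply,
          glueP_final u₁ u₂ w hr]
        exact iterate_fixed_pt (glueP_root u₁ u₂ w hr) _
      rw [this]; exact hr
  · intro v hv
    obtain ⟨m, _, hm⟩ := glueP_cover u₁ u₂ w hr hv
    exact ⟨m, hm⟩

end FibersP

section GammaPsec
variable {P Q : ℕ} {c : Set (V P Q)}

def GammaP (hr : rt P Q ∈ c) :
    ((Fin (Nat.card (Tc P Q c)) ≃ Sc P Q c) × (Fin (Nat.card (Tc P Q c)) ≃ Tc P Q c))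
      × Wc P Q c → fiberP c :=
  fun x => ⟨⟨s0 x.1.1, ⟨glueP x.1.1 x.1.2 x.2,
    glueP_bip x.1.1 x.1.2 x.2 hr, glueP_reach x.1.1 x.1.2 x.2 hr⟩⟩,
    glueP_pathSet x.1.1 x.1.2 x.2 hr⟩

lemma GammaP_injective (hr : rt P Q ∈ c) : Function.Injective (GammaP (c := c) hr) := by
  rintro ⟨⟨u₁, u₂⟩, w⟩ ⟨⟨u₁', u₂'⟩, w'⟩ hg
  have hg2 := congrArg Subtype.val hg
  have hs : s0 u₁ = s0 u₁' := congrArg Prod.fst hg2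
  have hf : glueP u₁ u₂ w = glueP u₁' u₂' w' :=
    congrArg (fun z : Fin (P+1) × FF P Q => z.2.1) hg2
  have hu₁ : u₁ = u₁' := by
    apply Equiv.ext; intro i
    have h1 := glueP_orbit_even u₁ u₂ w i.1 i.2
    have h2 := glueP_orbit_even u₁' u₂' w' i.1 i.2
    rw [← hs, ← hf] at h2
    rw [h1] at h2
    exact Subtype.ext (Sum.inl.inj h2)
  have hu₂ : u₂ = u₂' := by
    apply Equiv.ext; intro i
    have h1 := glueP_orbit_odd u₁ u₂ w i.1 i.2
    have h2 := glueP_orbit_odd u₁' u₂' w' i.1 i.2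
    rw [← hs, ← hf] at h2
    rw [h1] at h2
    exact Subtype.ext (Sum.inr.inj h2)
  have hw : w = w' := by
    apply Subtype.ext; funext v
    by_cases hv : v ∈ c
    · rw [w.2.1 v hv, w'.2.1 v hv]
    · have := congrFun hf v
      rw [glueP_not_mem u₁ u₂ w hv, glueP_not_mem u₁' u₂' w' hv] at this
      exact this
  rw [hu₁, hu₂, hw]

set_option maxHeartbeats 1000000 in
lemma GammaP_surjective (hr : rt P Q ∈ c) : Function.Surjective (GammaP (c := c) hr) := by
  rintro ⟨⟨s₀, f, hbip, hreach⟩, hpath⟩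
  replace hpath : Set.range (fun n : ℕ => f^[n] (Sum.inl s₀)) = c := hpath
  have hroot : f (rt P Q) = rt P Q := hbip.1
  have hsucc : ∀ m : ℕ, f^[m+1] (Sum.inl s₀) = f (f^[m] (Sum.inl s₀)) :=
    fun m => Function.iterate_succ_apply' f m _
  have hex : ∃ n, f^[n] (Sum.inl s₀) = rt P Q := hreach _
  set n₀ := Nat.find hex with hn₀def
  have hn₀ : f^[n₀] (Sum.inl s₀) = rt P Q := Nat.find_spec hex
  have hmin : ∀ m, m < n₀ → f^[m] (Sum.inl s₀) ≠ rt P Q := fun m hm => Nat.find_min hex hm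
  have hafter : ∀ m, n₀ ≤ m → f^[m] (Sum.inl s₀) = rt P Q := by
    intro m hm
    rw [show m = (m - n₀) + n₀ by omega, Function.iterate_add_apply, hn₀]
    exact iterate_fixed_pt hroot _
  have hdist : ∀ i j, i < j → j ≤ n₀ → f^[i] (Sum.inl s₀) ≠ f^[j] (Sum.inl s₀) := by
    intro i j hij hj heq
    apply hmin ((n₀ - j) + i) (by omega)
    rw [Function.iterate_add_apply, heq, ← Function.iterate_add_apply,
      show n₀ - j + j = n₀ by omega]
    exact hn₀
  have hpar : ∀ m, m ≤ n₀ →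
      (Even m → ∃ a : Fin (P+1), f^[m] (Sum.inl s₀) = Sum.inl a) ∧
      (¬ Even m → ∃ b : Fin (Q+1), f^[m] (Sum.inl s₀) = Sum.inr b) := by
    intro m
    induction m with
    | zero => exact fun _ => ⟨fun _ => ⟨s₀, rfl⟩, fun h => absurd Even.zero h⟩
    | succ m ih =>
      intro hm
      have hm' : m ≤ n₀ := by omega
      constructor
      · intro hev
        have hodd : ¬ Even m := by
          rw [Nat.even_add_one] at hev; exact hev
        obtain ⟨b, hb⟩ := (ih hm').2 hodd
        obtain ⟨a, ha⟩ := hbip.2.2 b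
        exact ⟨a, by rw [hsucc, hb]; exact ha⟩
      · intro hodd
        have hev : Even m := by
          rw [Nat.even_add_one, not_not] at hodd; exact hodd
        obtain ⟨a, ha⟩ := (ih hm').1 hev
        have ha0 : a ≠ 0 := by
          rintro rfl
          exact hmin m (by omega) ha
        obtain ⟨b, hb⟩ := hbip.2.1 a ha0
        exact ⟨b, by rw [hsucc, ha]; exact hb⟩
  have heven : Even n₀ := by
    by_contra h
    obtain ⟨b, hb⟩ := (hpar n₀ le_rfl).2 h
    rw [hn₀] at hb
    simp [rt] at hb
  obtain ⟨k₀, hk₀⟩ : ∃ k₀, n₀ = 2 * k₀ := by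
    obtain ⟨t, ht⟩ := heven; exact ⟨t, by omega⟩
  have hrc : rt P Q ∈ c := by rw [← hpath]; exact ⟨n₀, hn₀⟩
  have hsrc : ∀ i, i < k₀ → ∃ a : Fin (P+1), a ≠ 0 ∧ Sum.inl a ∈ c ∧
      f^[2*i] (Sum.inl s₀) = Sum.inl a := by
    intro i hi
    obtain ⟨a, ha⟩ := (hpar (2*i) (by omega)).1 ⟨i, by ring⟩
    refine ⟨a, ?_, ?_, ha⟩
    · rintro rfl
      exact hmin (2*i) (by omega) ha
    · rw [← hpath]; exact ⟨2*i, ha⟩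
  have hsnk : ∀ i, i < k₀ → ∃ b : Fin (Q+1), Sum.inr b ∈ c ∧
      f^[2*i+1] (Sum.inl s₀) = Sum.inr b := by
    intro i hi
    have hodd : ¬ Even (2*i+1) := by
      rintro ⟨t, ht⟩; omega
    obtain ⟨b, hb⟩ := (hpar (2*i+1) (by omega)).2 hodd
    exact ⟨b, by rw [← hpath]; exact ⟨2*i+1, hb⟩, hb⟩
  -- the bijections on `Fin k₀`
  set smap : Fin k₀ → Sc P Q c := fun i =>
    ⟨(hsrc i.1 i.2).choose, (hsrc i.1 i.2).choose_spec.1, (hsrc i.1 i.2).choose_spec.2.1⟩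
    with hsmapdef
  have smap_spec : ∀ i : Fin k₀, f^[2*i.1] (Sum.inl s₀) = Sum.inl (smap i).1 :=
    fun i => (hsrc i.1 i.2).choose_spec.2.2
  have smap_bij : Function.Bijective smap := by
    constructor
    · intro i j hij
      by_contra hne
      have hvs : f^[2*i.1] (Sum.inl s₀) = f^[2*j.1] (Sum.inl s₀) := by
        rw [smap_spec i, smap_spec j, hij]
      have hne' : i.1 ≠ j.1 := fun h => hne (Fin.ext h)
      rcases Nat.lt_or_ge i.1 j.1 with h | h
      · exact hdist (2*i.1) (2*j.1) (by omega) (by omega) hvs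
      · exact hdist (2*j.1) (2*i.1) (by omega) (by omega) hvs.symm
    · rintro ⟨a, ha, hac⟩
      rw [← hpath] at hac
      obtain ⟨m, hm⟩ := hac
      simp only at hm
      have hmlt : m < n₀ := by
        by_contra h
        have := hafter m (by omega)
        rw [this] at hm
        apply ha
        simpa [rt] using hm.symm
      have hevm : Even m := by
        by_contra h
        obtain ⟨b, hb⟩ := (hpar m (by omega)).2 h
        rw [hm] at hb; simp at hb
      obtain ⟨i, hi⟩ : ∃ i, m = 2 * i := by obtain ⟨t, ht⟩ := hevm; exact ⟨t, by omega⟩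
      refine ⟨⟨i, by omega⟩, ?_⟩
      apply Subtype.ext
      have h5 : f^[2*i] (Sum.inl s₀) = Sum.inl (smap ⟨i, by omega⟩).1 := smap_spec ⟨i, by omega⟩
      have hm' : f^[2*i] (Sum.inl s₀) = Sum.inl a := by rw [← hi]; exact hm
      exact Sum.inl.inj (h5.symm.trans hm')
  set tmap : Fin k₀ → Tc P Q c := fun i =>
    ⟨(hsnk i.1 i.2).choose, (hsnk i.1 i.2).choose_spec.1⟩ with htmapdef
  have tmap_spec : ∀ i : Fin k₀, f^[2*i.1+1] (Sum.inl s₀) = Sum.inr (tmap i).1 :=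
    fun i => (hsnk i.1 i.2).choose_spec.2
  have tmap_bij : Function.Bijective tmap := by
    constructor
    · intro i j hij
      by_contra hne
      have hvs : f^[2*i.1+1] (Sum.inl s₀) = f^[2*j.1+1] (Sum.inl s₀) := by
        rw [tmap_spec i, tmap_spec j, hij]
      have hne' : i.1 ≠ j.1 := fun h => hne (Fin.ext h)
      rcases Nat.lt_or_ge i.1 j.1 with h | h
      · exact hdist (2*i.1+1) (2*j.1+1) (by omega) (by omega) hvs
      · exact hdist (2*j.1+1) (2*i.1+1) (by omega) (by omega) hvs.symm
    · rintro ⟨b, hbc⟩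
      rw [← hpath] at hbc
      obtain ⟨m, hm⟩ := hbc
      simp only at hm
      have hmlt : m < n₀ := by
        by_contra h
        have := hafter m (by omega)
        rw [this] at hm
        simp [rt] at hm
      have hoddm : ¬ Even m := by
        intro h
        obtain ⟨a, ha⟩ := (hpar m (by omega)).1 h
        rw [hm] at ha; simp at ha
      obtain ⟨i, hi⟩ : ∃ i, m = 2 * i + 1 := by
        rcases Nat.even_or_odd m with h | ⟨t, ht⟩
        · exact absurd h hoddm
        · exact ⟨t, by omega⟩
      refine ⟨⟨i, by omega⟩, ?_⟩
      apply Subtype.ext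
      have h5 : f^[2*i+1] (Sum.inl s₀) = Sum.inr (tmap ⟨i, by omega⟩).1 := tmap_spec ⟨i, by omega⟩
      have hm' : f^[2*i+1] (Sum.inl s₀) = Sum.inr b := by rw [← hi]; exact hm
      exact Sum.inr.inj (h5.symm.trans hm')
  have hk : Nat.card (Tc P Q c) = k₀ := by
    rw [Nat.card_congr (Equiv.ofBijective tmap tmap_bij).symm, Nat.card_eq_fintype_card,
      Fintype.card_fin]
  -- converted index maps
  set smap' : Fin (Nat.card (Tc P Q c)) → Sc P Q c := smap ∘ (finCongr hk) with hsmap'def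
  set tmap' : Fin (Nat.card (Tc P Q c)) → Tc P Q c := tmap ∘ (finCongr hk) with htmap'def
  have smap'_bij : Function.Bijective smap' := smap_bij.comp (finCongr hk).bijective
  have tmap'_bij : Function.Bijective tmap' := tmap_bij.comp (finCongr hk).bijective
  have smap'_spec : ∀ i : Fin (Nat.card (Tc P Q c)),
      f^[2*i.1] (Sum.inl s₀) = Sum.inl (smap' i).1 := by
    intro i
    have h5 := smap_spec (finCongr hk i)
    simpa [hsmap'def] using h5
  have tmap'_spec : ∀ i : Fin (Nat.card (Tc P Q c)),
      f^[2*i.1+1] (Sum.inl s₀) = Sum.inr (tmap' i).1 := by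
    intro i
    have h5 := tmap_spec (finCongr hk i)
    simpa [htmap'def] using h5
  set u₁ := Equiv.ofBijective smap' smap'_bij with hu₁def
  set u₂ := Equiv.ofBijective tmap' tmap'_bij with hu₂def
  have hu₁app : ∀ i, u₁ i = smap' i := fun i => rfl
  have hu₂app : ∀ i, u₂ i = tmap' i := fun i => rfl
  -- the outside function
  have hwmem : (∀ v ∈ c, (fun v => if v ∈ c then v else f v) v = v) ∧
      (∀ a : Fin (P+1), Sum.inl a ∉ c →
        ∃ b, (fun v => if v ∈ c then v else f v) (Sum.inl a) = Sum.inr b) ∧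
      (∀ b : Fin (Q+1), Sum.inr b ∉ c →
        ∃ a, (fun v => if v ∈ c then v else f v) (Sum.inr b) = Sum.inl a) ∧
      (∀ v, ∃ n, (fun v => if v ∈ c then v else f v)^[n] v ∈ c) := by
    refine ⟨fun v hv => if_pos hv, ?_, ?_, ?_⟩
    · intro a hac
      have ha : a ≠ 0 := by rintro rfl; exact hac hrc
      obtain ⟨b, hb⟩ := hbip.2.1 a ha
      exact ⟨b, by dsimp only; rw [if_neg hac]; exact hb⟩
    · intro b hbc
      obtain ⟨a, ha⟩ := hbip.2.2 b
      exact ⟨a, by dsimp only; rw [if_neg hbc]; exact ha⟩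
    · intro v
      obtain ⟨n, hn⟩ := hreach v
      have hn' : f^[n] v ∈ c := by rw [hn]; exact hrc
      exact enters_of_agree (fun u hu => if_neg hu) hn'
  set w : Wc P Q c := ⟨fun v => if v ∈ c then v else f v, hwmem⟩ with hwdef
  refine ⟨⟨⟨u₁, u₂⟩, w⟩, ?_⟩
  -- now prove GammaP hr ⟨⟨u₁,u₂⟩,w⟩ = the given element
  have hs0 : s0 u₁ = s₀ := by
    rw [s0]
    by_cases hpos : 0 < Nat.card (Tc P Q c)
    · rw [dif_pos hpos]
      have := smap'_spec ⟨0, hpos⟩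
      simp only [Nat.mul_zero, Function.iterate_zero, id] at this
      exact (Sum.inl.inj this).symm
    · rw [dif_neg hpos]
      have hk₀0 : k₀ = 0 := by omega
      have : f^[0] (Sum.inl s₀) = rt P Q := hafter 0 (by omega)
      simp only [Function.iterate_zero, id] at this
      exact (Sum.inl.inj this).symm
  have hglue : glueP u₁ u₂ w = f := by
    funext v
    match v with
    | Sum.inl a =>
      by_cases h : a ≠ 0 ∧ Sum.inl a ∈ c
      · rw [glueP_inl_mem u₁ u₂ w h.1 h.2]
        set x := u₁.symm ⟨a, h.1, h.2⟩ with hxdef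
        have hx : u₁ x = ⟨a, h.1, h.2⟩ := Equiv.apply_symm_apply _ _
        have hva : f^[2*x.1] (Sum.inl s₀) = Sum.inl a := by
          rw [smap'_spec x]
          rw [show smap' x = u₁ x from rfl, hx]
        have hvb : f^[2*x.1+1] (Sum.inl s₀) = Sum.inr (u₂ x).1 := tmap'_spec x
        rw [← hvb, hsucc, hva]
      · by_cases h2 : Sum.inl a ∈ c
        · have ha : a = 0 := by tauto
          subst ha
          have h3 : glueP u₁ u₂ w (rt P Q) = rt P Q := glueP_root u₁ u₂ w hrc
          rw [show (Sum.inl 0 : V P Q) = rt P Q from rfl, h3, hroot]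
        · rw [glueP_not_mem u₁ u₂ w h2]
          show (if (Sum.inl a : V P Q) ∈ c then _ else f (Sum.inl a)) = f (Sum.inl a)
          rw [if_neg h2]
    | Sum.inr b =>
      by_cases h : Sum.inr b ∈ c
      · rw [glueP_inr_mem u₁ u₂ w h]
        set x := u₂.symm ⟨b, h⟩ with hxdef
        have hx : u₂ x = ⟨b, h⟩ := Equiv.apply_symm_apply _ _
        have hvb : f^[2*x.1+1] (Sum.inl s₀) = Sum.inr b := by
          rw [tmap'_spec x]
          rw [show tmap' x = u₂ x from rfl, hx]
        by_cases h2 : (x : ℕ) + 1 < Nat.card (Tc P Q c)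
        · rw [dif_pos h2]
          have hva : f^[2*(x.1+1)] (Sum.inl s₀) = Sum.inl (u₁ ⟨x.1+1, h2⟩).1 :=
            smap'_spec ⟨x.1+1, h2⟩
          rw [show 2*(x.1+1) = (2*x.1+1)+1 by ring, hsucc, hvb] at hva
          exact hva.symm
        · rw [dif_neg h2]
          have hx1 : x.1 = k₀ - 1 ∧ 0 < k₀ := by
            have := x.2; constructor <;> omega
          have hva : f^[(2*x.1+1)+1] (Sum.inl s₀) = rt P Q := by
            apply hafter
            omega
          rw [hsucc, hvb] at hva
          rw [hva]
          rfl
      · rw [glueP_not_mem u₁ u₂ w h]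
        show (if (Sum.inr b : V P Q) ∈ c then _ else f (Sum.inr b)) = f (Sum.inr b)
        rw [if_neg h]
  apply Subtype.ext
  show (⟨s0 u₁, _⟩ : Fin (P+1) × FF P Q) = ⟨s₀, _⟩
  refine Prod.ext hs0 ?_
  exact Subtype.ext hglue

lemma card_fiberP (hr : rt P Q ∈ c) :
    Nat.card (fiberP (P := P) (Q := Q) c) =
      Nat.card (Fin (Nat.card (Tc P Q c)) ≃ Sc P Q c) *
        Nat.card (Fin (Nat.card (Tc P Q c)) ≃ Tc P Q c) * Nat.card (Wc P Q c) := by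
  rw [← Nat.card_eq_of_bijective _ ⟨GammaP_injective hr, GammaP_surjective hr⟩,
    Nat.card_prod, Nat.card_prod, mul_assoc]

end GammaPsec

section Summation
variable {P Q : ℕ}

lemma card_equiv_eq {α β : Type*} [Finite α] [Finite β] :
    Nat.card (α ≃ β) = if Nat.card α = Nat.card β then Nat.factorial (Nat.card α) else 0 := by
  letI := Fintype.ofFinite α
  letI := Fintype.ofFinite β
  split_ifs with h
  · have e : α ≃ β := Fintype.equivOfCardEq (by
      rw [← Nat.card_eq_fintype_card, ← Nat.card_eq_fintype_card]; exact h)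
    rw [Nat.card_eq_fintype_card, Fintype.card_equiv e, Nat.card_eq_fintype_card]
  · have : IsEmpty (α ≃ β) := ⟨fun e => h (Nat.card_congr e)⟩
    exact Nat.card_of_isEmpty

lemma rt_mem_pathSet (x : Fin (P+1) × FF P Q) : rt P Q ∈ pathSet x := by
  obtain ⟨n, hn⟩ := x.2.2.2 (Sum.inl x.1)
  exact ⟨n, hn⟩

lemma rt_mem_per (f : GG P Q) : rt P Q ∈ per f.1 :=
  ⟨1, Nat.one_pos, by simpa using f.2.1⟩

lemma fibers_eq (c : Set (V P Q)) :
    Nat.card (fiberP (P := P) (Q := Q) c) = Nat.card (fiberG (P := P) (Q := Q) c) := by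
  by_cases hr : rt P Q ∈ c
  · rw [card_fiberP hr, card_fiberG hr]
    have hfin : Nat.card (Fin (Nat.card (Tc P Q c))) = Nat.card (Tc P Q c) := by
      rw [Nat.card_eq_fintype_card, Fintype.card_fin]
    rw [card_equiv_eq, card_equiv_eq, card_equiv_eq, card_equiv_eq, hfin]
    by_cases hst : Nat.card (Sc P Q c) = Nat.card (Tc P Q c)
    · simp [hst]
    · rw [if_neg (fun h => hst h.symm), if_neg hst, if_pos rfl]
      simp
  · have e1 : IsEmpty (fiberP (P := P) (Q := Q) c) := by
      constructor; rintro ⟨x, hx⟩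
      exact hr (hx ▸ rt_mem_pathSet x)
    have e2 : IsEmpty (fiberG (P := P) (Q := Q) c) := by
      constructor; rintro ⟨f, hf⟩
      exact hr (hf ▸ rt_mem_per f)
    rw [Nat.card_of_isEmpty, Nat.card_of_isEmpty]

lemma card_sum_fibers {α : Type*} [Finite α] (φ : α → Set (V P Q)) :
    Nat.card α = ∑ c : Set (V P Q), Nat.card {x // φ x = c} := by
  letI := Fintype.ofFinite α
  rw [Nat.card_eq_fintype_card, Fintype.card_congr (Equiv.sigmaFiberEquiv φ).symm,
    Fintype.card_sigma]
  apply Finset.sum_congr rfl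
  intro c _
  rw [Nat.card_eq_fintype_card]

lemma card_FF : Nat.card (FF P Q) = (P+1)^Q * (Q+1)^P := by
  have h1 : Nat.card (Fin (P+1) × FF P Q) = Nat.card (GG P Q) := by
    rw [card_sum_fibers (fun x : Fin (P+1) × FF P Q => pathSet x),
      card_sum_fibers (fun f : GG P Q => per f.1)]
    apply Finset.sum_congr rfl
    intro c _
    exact fibers_eq c
  rw [Nat.card_prod, Nat.card_eq_fintype_card (α := Fin (P+1)), Fintype.card_fin,
    card_GG] at h1
  have h2 : (P+1)^(Q+1) * (Q+1)^P = (P+1) * ((P+1)^Q * (Q+1)^P) := by ring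
  rw [h2] at h1
  exact Nat.eq_of_mul_eq_mul_left (by omega) h1

end Summation

section Graphs
variable {P Q : ℕ}

/-- steps-to-root function -/
def dd (f : FF P Q) (v : V P Q) : ℕ := Nat.find (f.2.2 v)

lemma dd_spec (f : FF P Q) (v : V P Q) : (f.1)^[dd f v] v = rt P Q :=
  Nat.find_spec (f.2.2 v)

lemma dd_rt (f : FF P Q) : dd f (rt P Q) = 0 := by
  rw [dd, Nat.find_eq_zero]
  rfl

lemma dd_eq_zero_iff (f : FF P Q) (v : V P Q) : dd f v = 0 ↔ v = rt P Q := by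
  constructor
  · intro h
    have := dd_spec f v
    rw [h] at this
    exact this
  · rintro rfl; exact dd_rt f

lemma dd_parent (f : FF P Q) {v : V P Q} (hv : v ≠ rt P Q) :
    dd f v = dd f (f.1 v) + 1 := by
  have h0 : dd f v ≠ 0 := fun h => hv ((dd_eq_zero_iff f v).mp h)
  have hle1 : dd f (f.1 v) ≤ dd f v - 1 := by
    apply Nat.find_le
    have := dd_spec f v
    rw [show dd f v = (dd f v - 1) + 1 by omega, Function.iterate_succ_apply] at this
    exact this
  have hle2 : dd f v ≤ dd f (f.1 v) + 1 := by
    apply Nat.find_le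
    rw [Function.iterate_succ_apply]
    exact dd_spec f (f.1 v)
  omega

lemma f_ne_self (f : FF P Q) {v : V P Q} (hv : v ≠ rt P Q) : f.1 v ≠ v := by
  intro h
  apply hv
  have := dd_spec f v
  rw [iterate_fixed_pt h] at this
  exact this

/-- the graph of a parent function -/
def tG (f : FF P Q) : SimpleGraph (V P Q) :=
  SimpleGraph.fromRel (fun x y => x ≠ rt P Q ∧ f.1 x = y)

lemma tG_adj_iff (f : FF P Q) {x y : V P Q} :
    (tG f).Adj x y ↔ x ≠ y ∧ ((x ≠ rt P Q ∧ f.1 x = y) ∨ (y ≠ rt P Q ∧ f.1 y = x)) :=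
  SimpleGraph.fromRel_adj _ x y

lemma tG_adj_parent (f : FF P Q) {v : V P Q} (hv : v ≠ rt P Q) :
    (tG f).Adj v (f.1 v) :=
  (tG_adj_iff f).mpr ⟨(f_ne_self f hv).symm, Or.inl ⟨hv, rfl⟩⟩

lemma tG_L1 (f : FF P Q) {x y : V P Q} (h : (tG f).Adj x y) :
    dd f x = dd f y + 1 ∨ dd f y = dd f x + 1 := by
  rcases (tG_adj_iff f).mp h with ⟨hne, ⟨hx, hfx⟩ | ⟨hy, hfy⟩⟩
  · left; rw [← hfx]; exact dd_parent f hx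
  · right; rw [← hfy]; exact dd_parent f hy

lemma tG_L2 (f : FF P Q) {x y z : V P Q} (hxy : (tG f).Adj x y) (hxz : (tG f).Adj x z)
    (hy : dd f y + 1 = dd f x) (hz : dd f z + 1 = dd f x) : y = z := by
  have hfy : f.1 x = y := by
    rcases (tG_adj_iff f).mp hxy with ⟨hne, ⟨hx, hfx⟩ | ⟨hy', hfy'⟩⟩
    · exact hfx
    · exfalso; have := dd_parent f hy'; rw [hfy'] at this; omega
  have hfz : f.1 x = z := by
    rcases (tG_adj_iff f).mp hxz with ⟨hne, ⟨hx, hfx⟩ | ⟨hz', hfz'⟩⟩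
    · exact hfx
    · exfalso; have := dd_parent f hz'; rw [hfz'] at this; omega
  rw [← hfy, ← hfz]

lemma tG_reach (f : FF P Q) (v : V P Q) : (tG f).Reachable v (rt P Q) := by
  have key : ∀ n (v : V P Q), dd f v ≤ n → (tG f).Reachable v (rt P Q) := by
    intro n
    induction n with
    | zero =>
      intro v hv
      rw [Nat.le_zero, dd_eq_zero_iff] at hv
      rw [hv]
    | succ n ih =>
      intro v hv
      by_cases hvr : v = rt P Q
      · rw [hvr]
      · have hd := dd_parent f hvr
        exact ((tG_adj_parent f hvr).reachable).trans (ih (f.1 v) (by omega))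
  exact key (dd f v) v le_rfl

lemma tG_connected (f : FF P Q) : (tG f).Connected := by
  have hpre : (tG f).Preconnected := fun u v => (tG_reach f u).trans (tG_reach f v).symm
  exact ⟨hpre⟩

lemma penult_ne_start {α : Type*} {G : SimpleGraph α} {x y : α} (t : G.Walk x y)
    (ht : t.IsPath) (h2 : 2 ≤ t.length) : t.getVert (t.length - 1) ≠ x := by
  cases t with
  | nil => simp at h2
  | @cons _ u _ h t' =>
    rw [SimpleGraph.Walk.cons_isPath_iff] at ht
    have hlen : (SimpleGraph.Walk.cons h t').length = t'.length + 1 :=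
      SimpleGraph.Walk.length_cons _ _
    have hgv : (SimpleGraph.Walk.cons h t').getVert ((SimpleGraph.Walk.cons h t').length - 1)
        = t'.getVert (t'.length - 1) := by
      have h3 := SimpleGraph.Walk.getVert_cons_succ (n := t'.length - 1) t' h
      rw [hlen]
      rw [show t'.length + 1 - 1 = (t'.length - 1) + 1 by omega, h3]
    rw [hgv]
    have hmem : t'.getVert (t'.length - 1) ∈ t'.support :=
      SimpleGraph.Walk.mem_support_iff_exists_getVert.mpr ⟨t'.length - 1, rfl, by omega⟩
    exact fun hx => ht.2 (hx ▸ hmem)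

lemma tG_acyclic (f : FF P Q) : (tG f).IsAcyclic := by
  intro u cyc hcyc
  have hsupne : cyc.support.toFinset.Nonempty :=
    ⟨u, List.mem_toFinset.mpr cyc.start_mem_support⟩
  obtain ⟨m, hmmem, hmax⟩ := Finset.exists_max_image cyc.support.toFinset (fun v => dd f v) hsupne
  replace hmmem : m ∈ cyc.support := List.mem_toFinset.mp hmmem
  have hmax' : ∀ x ∈ cyc.support, dd f x ≤ dd f m := fun x hx => hmax x (List.mem_toFinset.mpr hx)
  have hc' : (cyc.rotate m hmmem).IsCycle := hcyc.rotate hmmem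
  have hsub : ∀ x, x ∈ (cyc.rotate m hmmem).support → x ∈ cyc.support := by
    intro x hx
    rw [SimpleGraph.Walk.rotate] at hx
    rw [SimpleGraph.Walk.mem_support_append_iff] at hx
    rcases hx with hx | hx
    · exact SimpleGraph.Walk.support_dropUntil_subset _ _ hx
    · exact SimpleGraph.Walk.support_takeUntil_subset _ _ hx
  have hnn : ¬ (cyc.rotate m hmmem).Nil := hc'.not_nil
  obtain ⟨a, h₁, t, hrep⟩ := SimpleGraph.Walk.not_nil_iff.mp hnn
  have hlen3 : 3 ≤ (cyc.rotate m hmmem).length := hc'.three_le_length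
  have hc'' := hc'
  rw [hrep, SimpleGraph.Walk.cons_isCycle_iff] at hc''
  have htlen : 2 ≤ t.length := by
    rw [hrep] at hlen3
    simp only [SimpleGraph.Walk.length_cons] at hlen3
    omega
  have hadjb : (tG f).Adj (t.getVert (t.length - 1)) m := by
    have h4 := SimpleGraph.Walk.adj_getVert_succ t (i := t.length - 1) (by omega)
    rw [show t.length - 1 + 1 = t.length by omega, SimpleGraph.Walk.getVert_length] at h4
    exact h4
  have hamem : a ∈ cyc.support := by
    apply hsub
    rw [hrep, SimpleGraph.Walk.support_cons]
    exact List.mem_cons_of_mem _ t.start_mem_support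
  have hbmem : t.getVert (t.length - 1) ∈ cyc.support := by
    apply hsub
    rw [hrep, SimpleGraph.Walk.support_cons]
    apply List.mem_cons_of_mem
    exact SimpleGraph.Walk.mem_support_iff_exists_getVert.mpr ⟨t.length - 1, rfl, by omega⟩
  have hab : a ≠ t.getVert (t.length - 1) :=
    fun h => (penult_ne_start t hc''.1 htlen) h.symm
  have hda : dd f a ≤ dd f m := hmax' a hamem
  have hdb : dd f (t.getVert (t.length - 1)) ≤ dd f m := hmax' _ hbmem
  have hL1a := tG_L1 f h₁
  have hL1b := tG_L1 f hadjb.symm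
  apply hab
  exact tG_L2 f h₁ hadjb.symm (by omega) (by omega)

lemma tG_isTree (f : FF P Q) : (tG f).IsTree := ⟨tG_connected f, tG_acyclic f⟩

lemma rt_eq_inl : rt P Q = Sum.inl 0 := rfl

lemma tG_noLL (f : FF P Q) : ∀ a b : Fin (P+1), ¬ (tG f).Adj (Sum.inl a) (Sum.inl b) := by
  intro a b h
  rcases (tG_adj_iff f).mp h with ⟨hne, ⟨hx, hfx⟩ | ⟨hy, hfy⟩⟩
  · have ha : a ≠ 0 := fun h0 => hx (by rw [h0]; rfl)
    obtain ⟨b', hb'⟩ := f.2.1.2.1 a ha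
    rw [hb'] at hfx
    simp at hfx
  · have hb : b ≠ 0 := fun h0 => hy (by rw [h0]; rfl)
    obtain ⟨b', hb'⟩ := f.2.1.2.1 b hb
    rw [hb'] at hfy
    simp at hfy

lemma tG_noRR (f : FF P Q) : ∀ a b : Fin (Q+1), ¬ (tG f).Adj (Sum.inr a) (Sum.inr b) := by
  intro a b h
  rcases (tG_adj_iff f).mp h with ⟨hne, ⟨hx, hfx⟩ | ⟨hy, hfy⟩⟩
  · obtain ⟨a', ha'⟩ := f.2.1.2.2 a
    rw [ha'] at hfx
    simp at hfx
  · obtain ⟨a', ha'⟩ := f.2.1.2.2 b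
    rw [ha'] at hfy
    simp at hfy

def TT (P Q : ℕ) : Type :=
  {G : SimpleGraph (V P Q) //
    G.IsTree ∧ (∀ a b : Fin (P+1), ¬ G.Adj (Sum.inl a) (Sum.inl b)) ∧
      (∀ a b : Fin (Q+1), ¬ G.Adj (Sum.inr a) (Sum.inr b))}

instance : Finite (SimpleGraph (V P Q)) :=
  Finite.of_injective (fun G => G.Adj) (fun _ _ h => SimpleGraph.ext h)

instance : Finite (TT P Q) := by unfold TT; infer_instance

def Psi : FF P Q → TT P Q :=
  fun f => ⟨tG f, tG_isTree f, tG_noLL f, tG_noRR f⟩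

end Graphs

section Bij
variable {P Q : ℕ}

lemma two_cycle (f : FF P Q) {v w : V P Q} (hvw : f.1 v = w) (hwv : f.1 w = v) :
    v = rt P Q := by
  have horb : ∀ n, f.1^[n] v = v ∨ f.1^[n] v = w := by
    intro n
    induction n with
    | zero => exact Or.inl rfl
    | succ n ih =>
      rw [Function.iterate_succ_apply']
      rcases ih with h | h
      · rw [h, hvw]; exact Or.inr rfl
      · rw [h, hwv]; exact Or.inl rfl
  have hspec := dd_spec f v
  rcases horb (dd f v) with h | h
  · rw [h] at hspec; exact hspec
  · rw [h] at hspec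
    rw [← hwv, hspec]
    exact f.2.1.1

lemma Psi_injective : Function.Injective (Psi (P := P) (Q := Q)) := by
  intro f f' h
  have hG : tG f = tG f' := congrArg Subtype.val h
  apply Subtype.ext; funext v
  have key : ∀ n (v : V P Q), dd f v ≤ n → f.1 v = f'.1 v := by
    intro n
    induction n with
    | zero =>
      intro v hv
      rw [Nat.le_zero, dd_eq_zero_iff] at hv
      rw [hv, f.2.1.1, f'.2.1.1]
    | succ n ih =>
      intro v hv
      by_cases hvr : v = rt P Q
      · rw [hvr, f.2.1.1, f'.2.1.1]
      · have hadj : (tG f').Adj v (f.1 v) := by rw [← hG]; exact tG_adj_parent f hvr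
        rcases (tG_adj_iff f').mp hadj with ⟨hne, ⟨_, hfx⟩ | ⟨hw, hfy⟩⟩
        · exact hfx.symm
        · exfalso
          have hdw : dd f (f.1 v) ≤ n := by have := dd_parent f hvr; omega
          have hw' : f.1 (f.1 v) = f'.1 (f.1 v) := ih (f.1 v) hdw
          have h2 : v = rt P Q := two_cycle f rfl (hw'.trans hfy)
          exact hvr h2
  exact key (dd f v) v le_rfl

lemma inl_eq_rt_iff {a : Fin (P+1)} : (Sum.inl a : V P Q) = rt P Q ↔ a = 0 := by
  simp [rt]

lemma Psi_surjective : Function.Surjective (Psi (P := P) (Q := Q)) := by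
  rintro ⟨G, htree, hLL, hRR⟩
  have hconn : G.Connected := htree.1
  have hside : ∀ {x y : V P Q}, G.Adj x y → x.isLeft ≠ y.isLeft := by
    intro x y h
    match x, y with
    | Sum.inl a, Sum.inl b => exact absurd h (hLL a b)
    | Sum.inr a, Sum.inr b => exact absurd h (hRR a b)
    | Sum.inl a, Sum.inr b => simp
    | Sum.inr a, Sum.inl b => simp
  have hpar : ∀ {x y : V P Q} (p : G.Walk x y), Even p.length ↔ x.isLeft = y.isLeft := by
    intro x y p
    induction p with
    | nil => simp
    | @cons u v w h p ih =>
      rw [SimpleGraph.Walk.length_cons, Nat.even_add_one, ih]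
      have hs := hside h
      cases hu : u.isLeft <;> cases hv : v.isLeft <;> cases hw : w.isLeft <;> simp_all
  have hdistpar : ∀ x : V P Q, Even (G.dist x (rt P Q)) ↔ x.isLeft = true := by
    intro x
    obtain ⟨p, hp⟩ := (hconn.preconnected x (rt P Q)).exists_walk_length_eq_dist
    rw [← hp, hpar p]
    simp [rt]
  have hadj_dist_ne : ∀ {x y : V P Q}, G.Adj x y →
      G.dist x (rt P Q) ≠ G.dist y (rt P Q) := by
    intro x y h heq
    have h1 := hdistpar x
    have h2 := hdistpar y
    rw [heq] at h1
    have hs := hside h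
    cases hx : x.isLeft <;> cases hy : y.isLeft <;> simp_all
  have hadj_dist_le : ∀ {x y : V P Q}, G.Adj x y →
      G.dist x (rt P Q) ≤ G.dist y (rt P Q) + 1 := by
    intro x y h
    obtain ⟨q, hq⟩ := (hconn.preconnected y (rt P Q)).exists_walk_length_eq_dist
    have hd := SimpleGraph.dist_le (SimpleGraph.Walk.cons h q)
    rw [SimpleGraph.Walk.length_cons, hq] at hd
    exact hd
  have hpex : ∀ v : V P Q, v ≠ rt P Q →
      ∃ w, G.Adj v w ∧ G.dist w (rt P Q) + 1 = G.dist v (rt P Q) := by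
    intro v hv
    obtain ⟨p, hp⟩ := (hconn.preconnected v (rt P Q)).exists_walk_length_eq_dist
    have hpos : 0 < G.dist v (rt P Q) := hconn.pos_dist_of_ne hv
    have hnn : ¬ p.Nil := by rw [SimpleGraph.Walk.not_nil_iff_lt_length]; omega
    refine ⟨p.getVert 1, SimpleGraph.Walk.adj_snd hnn, ?_⟩
    have h1 : G.dist (p.getVert 1) (rt P Q) ≤ p.length - 1 := by
      have h2 := SimpleGraph.dist_le p.tail
      have h3 := SimpleGraph.Walk.length_tail_add_one hnn
      change G.dist (p.getVert 1) (rt P Q) ≤ p.tail.length at h2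
      omega
    have h2 := hadj_dist_le (SimpleGraph.Walk.adj_snd hnn)
    change G.dist v (rt P Q) ≤ G.dist (p.getVert 1) (rt P Q) + 1 at h2
    rw [hp] at h1
    omega
  have hpuniq : ∀ v, v ≠ rt P Q → ∀ w w',
      G.Adj v w → G.dist w (rt P Q) + 1 = G.dist v (rt P Q) →
      G.Adj v w' → G.dist w' (rt P Q) + 1 = G.dist v (rt P Q) → w = w' := by
    intro v hv w w' haw hdw haw' hdw'
    have build : ∀ u, G.Adj v u → G.dist u (rt P Q) + 1 = G.dist v (rt P Q) →
        ∃ p : G.Walk v (rt P Q), p.IsPath ∧ p.getVert 1 = u := by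
      intro u hau hdu
      obtain ⟨q, hq⟩ := (hconn.preconnected u (rt P Q)).exists_walk_length_eq_dist
      have hb : q.bypass.IsPath := SimpleGraph.Walk.bypass_isPath q
      have hblen : q.bypass.length ≤ q.length := SimpleGraph.Walk.length_bypass_le q
      have hbge : G.dist u (rt P Q) ≤ q.bypass.length := SimpleGraph.dist_le _
      have hvnot : v ∉ q.bypass.support := by
        intro hmem
        have hd1 := SimpleGraph.dist_le (q.bypass.dropUntil v hmem)
        have hd2 := SimpleGraph.Walk.length_dropUntil_le q.bypass hmem
        omega
      exact ⟨SimpleGraph.Walk.cons hau q.bypass,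
        (SimpleGraph.Walk.cons_isPath_iff _ _).mpr ⟨hb, hvnot⟩,
        SimpleGraph.Walk.snd_cons _ hau⟩
    obtain ⟨p1, hp1, hg1⟩ := build w haw hdw
    obtain ⟨p2, hp2, hg2⟩ := build w' haw' hdw'
    obtain ⟨pu, _, hup⟩ := (SimpleGraph.isTree_iff_existsUnique_path.mp htree).2 v (rt P Q)
    have e1 : p1 = pu := hup p1 hp1
    have e2 : p2 = pu := hup p2 hp2
    rw [← hg1, ← hg2, e1, e2]
  -- define the parent function
  have hpf : ∀ v : V P Q, ∃ w, (v = rt P Q → w = rt P Q) ∧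
      (v ≠ rt P Q → G.Adj v w ∧ G.dist w (rt P Q) + 1 = G.dist v (rt P Q)) := by
    intro v
    by_cases hv : v = rt P Q
    · exact ⟨rt P Q, fun _ => rfl, fun h => absurd hv h⟩
    · obtain ⟨w, hw⟩ := hpex v hv
      exact ⟨w, fun h => absurd h hv, fun _ => hw⟩
  set pf : V P Q → V P Q := fun v => (hpf v).choose with hpfdef
  have pf_rt : pf (rt P Q) = rt P Q := (hpf (rt P Q)).choose_spec.1 rfl
  have pf_spec : ∀ v, v ≠ rt P Q →
      G.Adj v (pf v) ∧ G.dist (pf v) (rt P Q) + 1 = G.dist v (rt P Q) :=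
    fun v hv => (hpf v).choose_spec.2 hv
  have hBip : Bip P Q pf := by
    refine ⟨pf_rt, ?_, ?_⟩
    · intro a ha
      have hv : (Sum.inl a : V P Q) ≠ rt P Q := fun h => ha (inl_eq_rt_iff.mp h)
      have hadj := (pf_spec _ hv).1
      match hw : pf (Sum.inl a) with
      | Sum.inl b => rw [hw] at hadj; exact absurd hadj (hLL a b)
      | Sum.inr b => exact ⟨b, rfl⟩
    · intro b
      have hv : (Sum.inr b : V P Q) ≠ rt P Q := by simp [rt]
      have hadj := (pf_spec _ hv).1
      match hw : pf (Sum.inr b) with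
      | Sum.inr b' => rw [hw] at hadj; exact absurd hadj (hRR b b')
      | Sum.inl a => exact ⟨a, rfl⟩
  have hReach : ∀ v : V P Q, ∃ n, pf^[n] v = rt P Q := by
    have key : ∀ n (v : V P Q), G.dist v (rt P Q) ≤ n → ∃ m, pf^[m] v = rt P Q := by
      intro n
      induction n with
      | zero =>
        intro v hv
        rw [Nat.le_zero, hconn.dist_eq_zero_iff] at hv
        exact ⟨0, hv⟩
      | succ n ih =>
        intro v hv
        by_cases hvr : v = rt P Q
        · exact ⟨0, hvr⟩
        · have := (pf_spec v hvr).2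
          obtain ⟨m, hm⟩ := ih (pf v) (by omega)
          exact ⟨m + 1, by rw [Function.iterate_succ_apply]; exact hm⟩
    exact fun v => key _ v le_rfl
  refine ⟨⟨pf, hBip, hReach⟩, ?_⟩
  apply Subtype.ext
  show tG _ = G
  apply SimpleGraph.ext
  ext x y
  constructor
  · intro h
    rcases (tG_adj_iff _).mp h with ⟨hne, ⟨hx, hfx⟩ | ⟨hy, hfy⟩⟩
    · have hfx' : pf x = y := hfx
      have := (pf_spec x hx).1
      rw [hfx'] at this
      exact this
    · have hfy' : pf y = x := hfy
      have := (pf_spec y hy).1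
      rw [hfy'] at this
      exact this.symm
  · intro h
    have hne := hadj_dist_ne h
    have h1 := hadj_dist_le h
    have h2 := hadj_dist_le h.symm
    rcases Nat.lt_or_ge (G.dist x (rt P Q)) (G.dist y (rt P Q)) with hlt | hge
    · -- y is farther : pf y = x
      have hyr : y ≠ rt P Q := by
        intro hy
        rw [hy, SimpleGraph.dist_self] at hlt
        omega
      have hx' : G.dist x (rt P Q) + 1 = G.dist y (rt P Q) := by omega
      have := hpuniq y hyr (pf y) x (pf_spec y hyr).1 (pf_spec y hyr).2 h.symm hx'
      exact (tG_adj_iff _).mpr ⟨h.ne, Or.inr ⟨hyr, this⟩⟩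
    · have hlt' : G.dist y (rt P Q) < G.dist x (rt P Q) := by omega
      have hxr : x ≠ rt P Q := by
        intro hx
        rw [hx, SimpleGraph.dist_self] at hlt'
        omega
      have hy' : G.dist y (rt P Q) + 1 = G.dist x (rt P Q) := by omega
      have := hpuniq x hxr (pf x) y (pf_spec x hxr).1 (pf_spec x hxr).2 h hy'
      exact (tG_adj_iff _).mpr ⟨h.ne, Or.inl ⟨hxr, this⟩⟩

lemma card_TT : Nat.card (TT P Q) = (P+1)^Q * (Q+1)^P := by
  rw [← card_FF]
  exact (Nat.card_eq_of_bijective Psi ⟨Psi_injective, Psi_surjective⟩).symm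

end Bij

end
end BipProof

/-- The number of labeled trees on `p` specified sources and `q` specified sinks, all of
whose edges join a source to a sink (i.e. spanning trees of `K_{p,q}`), is
`p^(q-1) q^(p-1)`. -/
theorem card_bipartite_trees (p q : ℕ) (hp : 1 ≤ p) (hq : 1 ≤ q) :
    Nat.card {G : SimpleGraph (Fin p ⊕ Fin q) //
        G.IsTree ∧ (∀ a b : Fin p, ¬ G.Adj (Sum.inl a) (Sum.inl b)) ∧
          (∀ a b : Fin q, ¬ G.Adj (Sum.inr a) (Sum.inr b))}
      = p ^ (q - 1) * q ^ (p - 1) := by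
  obtain ⟨P, rfl⟩ : ∃ P, p = P + 1 := ⟨p - 1, by omega⟩
  obtain ⟨Q, rfl⟩ : ∃ Q, q = Q + 1 := ⟨q - 1, by omega⟩
  have h := BipProof.card_TT (P := P) (Q := Q)
  simp only [Nat.add_sub_cancel]
  exact h
end

section
/- Hermite linearization: for every nonnegative integer r, H_r(x)²/(2^r r!) = ∑_{k=0}^{r} (r!/(2^k (k!)² (r−k)!)) H_{2k}(x) as an identity of polynomials. -/
/-- The physicists' Hermite polynomials via the Rodrigues formula
`H_n(x) = (-1)^n e^{x²} (d/dx)^n e^{-x²}`. -/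
noncomputable def physHermite (n : ℕ) (x : ℝ) : ℝ :=
  (-1) ^ n * Real.exp (x ^ 2) * iteratedDeriv n (fun y : ℝ => Real.exp (-y ^ 2)) x

open Polynomial Finset


noncomputable def PH : ℕ → Polynomial ℝ
  | 0 => 1
  | n + 1 => 2 * X * PH n - derivative (PH n)

lemma PH_zero : PH 0 = 1 := rfl
lemma PH_succ (n : ℕ) : PH (n + 1) = 2 * X * PH n - derivative (PH n) := rfl

lemma PH_deriv_aux : ∀ n : ℕ, derivative (PH n) = 2 * (n : ℝ[X]) * PH (n - 1)
    ∧ derivative (PH (n + 1)) = 2 * ((n : ℝ[X]) + 1) * PH n := by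
  intro n
  induction n with
  | zero =>
    refine ⟨by simp [PH_zero], ?_⟩
    simp [PH_succ, PH_zero]
  | succ n ih =>
    obtain ⟨ih1, ih2⟩ := ih
    refine ⟨by push_cast; exact ih2, ?_⟩
    have h : PH (n + 1) = 2 * X * PH n - 2 * (n : ℝ[X]) * PH (n - 1) := by
      rw [PH_succ, ih1]
    rw [PH_succ (n + 1), derivative_sub, derivative_mul, derivative_mul, ih2,
      derivative_mul, derivative_mul, ih1]
    simp only [derivative_ofNat, derivative_X, derivative_natCast, derivative_one]
    rw [h]
    push_cast
    simp only [derivative_add, derivative_natCast, derivative_one, add_zero]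
    ring

lemma PH_deriv (n : ℕ) : derivative (PH n) = 2 * (n : ℝ[X]) * PH (n - 1) :=
  (PH_deriv_aux n).1

lemma PH_mul2X (n : ℕ) : 2 * X * PH n = PH (n + 1) + 2 * (n : ℝ[X]) * PH (n - 1) := by
  rw [PH_succ, PH_deriv]; ring

lemma PH_rec (n : ℕ) : PH (n + 2) = 2 * X * PH (n + 1) - 2 * ((n : ℝ[X]) + 1) * PH n := by
  rw [PH_succ (n + 1), (PH_deriv_aux n).2]

/-- coefficient in the linearization -/
def lc (m n k : ℕ) : ℕ := m.choose k * n.choose k * 2 ^ k * k.factorial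

lemma lc_key {K : Type*} [CommRing K] (m n k : ℕ) (hk : k ≤ n + 1) :
    (lc m (n + 2) (k + 1) : K)
      = lc m (n + 1) (k + 1) + lc m (n + 1) k * (2 * ((m + n + 1 - 2 * k : ℕ) : K))
        - 2 * (n + 1) * lc m n k := by
  rcases lt_or_ge m k with hm | hm
  · simp [lc, Nat.choose_eq_zero_of_lt hm, Nat.choose_eq_zero_of_lt (hm.trans (Nat.lt_succ_self k))]
  · have hsub : ((m + n + 1 - 2 * k : ℕ) : K) = (m : K) + n + 1 - 2 * k := by
      have : 2 * k ≤ m + n + 1 := by omega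
      push_cast [Nat.cast_sub this]; ring
    have h1 : (m.choose (k + 1) : K) * (k + 1) = m.choose k * ((m : K) - k) := by
      have := Nat.choose_succ_right_eq m k
      calc (m.choose (k + 1) : K) * (k + 1) = ((m.choose (k + 1) * (k + 1) : ℕ) : K) := by
            push_cast; ring
        _ = ((m.choose k * (m - k) : ℕ) : K) := by rw [this]
        _ = m.choose k * ((m : K) - k) := by push_cast [Nat.cast_sub hm]; ring
    have h2 : (((n + 2).choose (k + 1) : ℕ) : K) = (n + 1).choose k + (n + 1).choose (k + 1) := by
      rw [Nat.choose_succ_succ (n + 1) k]; push_cast; ring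
    have h4 : (((n + 1).choose k : ℕ) : K) * ((n : K) + 1 - k) = (n + 1) * n.choose k := by
      have e1 := Nat.add_one_mul_choose_eq n k
      have e2 := Nat.choose_succ_right_eq (n + 1) k
      have h : (n + 1).choose k * (n + 1 - k) = (n + 1) * n.choose k :=
        e2.symm.trans e1.symm
      calc (((n + 1).choose k : ℕ) : K) * ((n : K) + 1 - k)
          = ((n + 1).choose k * (n + 1 - k) : ℕ) := by push_cast [Nat.cast_sub hk]; ring
        _ = ((n + 1) * n.choose k : ℕ) := by rw [h]
        _ = ((n : K) + 1) * n.choose k := by push_cast; ring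
    simp only [lc, hsub]
    push_cast [Nat.factorial_succ]
    linear_combination (2 * (2:K) ^ k * k.factorial * (k + 1) * m.choose (k + 1)) * h2
      + (2 * (2:K) ^ k * k.factorial * (n + 1).choose k) * h1
      - (2 * (2:K) ^ k * k.factorial * m.choose k) * h4

lemma PH_mul : ∀ (n m : ℕ), PH m * PH n
    = ∑ k ∈ Finset.range (n + 1), (lc m n k : ℝ[X]) * PH (m + n - 2 * k) := by
  intro n
  induction n using Nat.twoStepInduction with
  | zero => intro m; simp [lc, PH_zero]
  | one =>
    intro m
    have h1 : PH 1 = 2 * X := by simp [PH_succ, PH_zero]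
    rw [Finset.sum_range_succ, Finset.sum_range_succ, Finset.sum_range_zero, h1]
    have h2 : m + 1 - 2 * 1 = m - 1 := by omega
    have h3 : m + 1 - 2 * 0 = m + 1 := by omega
    rw [h2, h3]
    have h4 := PH_mul2X m
    have e0 : (lc m 1 0 : ℝ[X]) = 1 := by simp [lc]
    have e1 : (lc m 1 1 : ℝ[X]) = 2 * (m : ℝ[X]) := by
      simp [lc, Nat.choose_one_right]; push_cast; ring
    rw [e0, e1]
    rw [mul_comm (PH m), h4]
    ring
  | more n IH1 IH2 =>
    intro m
    -- notation
    set c : ℕ → ℝ[X] := fun k => (lc m (n + 1) k : ℝ[X]) with hc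
    set d : ℕ → ℝ[X] := fun k => (lc m n k : ℝ[X]) with hd
    have step1 : ∀ k ∈ Finset.range (n + 2),
        2 * X * (c k * PH (m + (n + 1) - 2 * k))
          = c k * PH (m + n + 2 - 2 * k)
            + c k * (2 * ((m + n + 1 - 2 * k : ℕ) : ℝ[X])) * PH (m + n - 2 * k) := by
      intro k hk
      have hkn : k ≤ n + 1 := by have := Finset.mem_range.mp hk; omega
      rcases le_or_gt (2 * k) (m + n + 1) with h | h
      · have i1 : m + (n + 1) - 2 * k + 1 = m + n + 2 - 2 * k := by omega
        have i2 : m + (n + 1) - 2 * k - 1 = m + n - 2 * k := by omega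
        have i3 : m + (n + 1) - 2 * k = m + n + 1 - 2 * k := by omega
        calc 2 * X * (c k * PH (m + (n + 1) - 2 * k))
            = c k * (2 * X * PH (m + (n + 1) - 2 * k)) := by ring
          _ = c k * (PH (m + (n + 1) - 2 * k + 1)
                + 2 * ((m + (n + 1) - 2 * k : ℕ) : ℝ[X]) * PH (m + (n + 1) - 2 * k - 1)) := by
              rw [PH_mul2X]
          _ = _ := by rw [i1, i2, i3]; ring
      · have hkm : m < k := by omega
        have : lc m (n + 1) k = 0 := by simp [lc, Nat.choose_eq_zero_of_lt hkm]
        simp [hc, this]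
    have ext1 : ∑ k ∈ Finset.range (n + 2), c (k + 1) * PH (m + n - 2 * k)
        = ∑ k ∈ Finset.range (n + 1), c (k + 1) * PH (m + n - 2 * k) := by
      rw [Finset.sum_range_succ]
      have : lc m (n + 1) (n + 2) = 0 := by
        simp [lc, Nat.choose_eq_zero_of_lt (Nat.lt_succ_self (n + 1))]
      simp [hc, this]
    have ext2 : ∑ k ∈ Finset.range (n + 2), 2 * ((n : ℝ[X]) + 1) * (d k * PH (m + n - 2 * k))
        = ∑ k ∈ Finset.range (n + 1), 2 * ((n : ℝ[X]) + 1) * (d k * PH (m + n - 2 * k)) := by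
      rw [Finset.sum_range_succ]
      have : lc m n (n + 1) = 0 := by
        simp [lc, Nat.choose_eq_zero_of_lt (Nat.lt_succ_self n)]
      simp [hd, this]
    have lhs_eq : PH m * PH (n + 2)
        = PH (m + (n + 1) + 1) + ∑ k ∈ Finset.range (n + 2),
            (c (k + 1) * PH (m + n - 2 * k)
              + c k * (2 * ((m + n + 1 - 2 * k : ℕ) : ℝ[X])) * PH (m + n - 2 * k)
              - 2 * ((n : ℝ[X]) + 1) * (d k * PH (m + n - 2 * k))) := by
      calc PH m * PH (n + 2)
          = 2 * X * (PH m * PH (n + 1)) - 2 * ((n : ℝ[X]) + 1) * (PH m * PH n) := by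
            rw [PH_rec]; ring
        _ = (∑ k ∈ Finset.range (n + 2), 2 * X * (c k * PH (m + (n + 1) - 2 * k)))
            - ∑ k ∈ Finset.range (n + 1), 2 * ((n : ℝ[X]) + 1) * (d k * PH (m + n - 2 * k)) := by
            rw [IH2 m, IH1 m, Finset.mul_sum, Finset.mul_sum]
        _ = (∑ k ∈ Finset.range (n + 2), (c k * PH (m + n + 2 - 2 * k)
              + c k * (2 * ((m + n + 1 - 2 * k : ℕ) : ℝ[X])) * PH (m + n - 2 * k)))
            - ∑ k ∈ Finset.range (n + 2), 2 * ((n : ℝ[X]) + 1) * (d k * PH (m + n - 2 * k)) := by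
            rw [Finset.sum_congr rfl step1, ext2]
        _ = ((∑ k ∈ Finset.range (n + 2), c k * PH (m + n + 2 - 2 * k))
              + ∑ k ∈ Finset.range (n + 2),
                  c k * (2 * ((m + n + 1 - 2 * k : ℕ) : ℝ[X])) * PH (m + n - 2 * k))
            - ∑ k ∈ Finset.range (n + 2), 2 * ((n : ℝ[X]) + 1) * (d k * PH (m + n - 2 * k)) := by
            rw [Finset.sum_add_distrib]
        _ = ((PH (m + (n + 1) + 1) + ∑ k ∈ Finset.range (n + 2), c (k + 1) * PH (m + n - 2 * k))
              + ∑ k ∈ Finset.range (n + 2),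
                  c k * (2 * ((m + n + 1 - 2 * k : ℕ) : ℝ[X])) * PH (m + n - 2 * k))
            - ∑ k ∈ Finset.range (n + 2), 2 * ((n : ℝ[X]) + 1) * (d k * PH (m + n - 2 * k)) := by
            rw [Finset.sum_range_succ' (fun k => c k * PH (m + n + 2 - 2 * k)) (n + 1)]
            have i4 : ∀ k : ℕ, m + n + 2 - 2 * (k + 1) = m + n - 2 * k := fun k => by omega
            have c0 : c 0 = 1 := by simp [hc, lc]
            simp only [i4, c0, one_mul, Nat.mul_zero, Nat.sub_zero]
            rw [ext1, show m + n + 2 = m + (n + 1) + 1 from by omega]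
            ring
        _ = _ := by
            rw [Finset.sum_sub_distrib, Finset.sum_add_distrib]
            ring
    have hsum : ∑ k ∈ Finset.range (n + 2), (lc m (n + 2) (k + 1) : ℝ[X]) * PH (m + n - 2 * k)
        = ∑ k ∈ Finset.range (n + 2),
            (c (k + 1) * PH (m + n - 2 * k)
              + c k * (2 * ((m + n + 1 - 2 * k : ℕ) : ℝ[X])) * PH (m + n - 2 * k)
              - 2 * ((n : ℝ[X]) + 1) * (d k * PH (m + n - 2 * k))) := by
      refine Finset.sum_congr rfl fun k hk => ?_
      have hk' : k ≤ n + 1 := by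
        have := Finset.mem_range.mp hk; omega
      rw [lc_key m n k hk']
      simp only [hc, hd]
      push_cast
      ring
    rw [lhs_eq, Finset.sum_range_succ' (fun k => (lc m (n + 2) k : ℝ[X])
      * PH (m + (n + 2) - 2 * k)) (n + 2)]
    have i5 : ∀ k : ℕ, m + (n + 2) - 2 * (k + 1) = m + n - 2 * k := fun k => by omega
    have e0 : (lc m (n + 2) 0 : ℝ[X]) = 1 := by simp [lc]
    simp only [i5, e0, one_mul, Nat.mul_zero, Nat.sub_zero]
    rw [hsum, show m + (n + 2) = m + (n + 1) + 1 from by omega]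
    ring

lemma deriv_gaussian_eq_PH (n : ℕ) (x : ℝ) :
    deriv^[n] (fun y : ℝ => Real.exp (-y ^ 2)) x
      = (-1 : ℝ) ^ n * (PH n).eval x * Real.exp (-x ^ 2) := by
  rw [mul_assoc]
  induction n generalizing x with
  | zero => simp [PH_zero]
  | succ n ih =>
    replace ih : deriv^[n] _ = _ := funext ih
    have dg : deriv (fun y : ℝ => Real.exp (-y ^ 2)) x = -(2 * x) * Real.exp (-x ^ 2) := by
      rw [deriv_exp (by fun_prop)]
      simp only [deriv.fun_neg', deriv_pow_field]
      ring_nf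
    rw [Function.iterate_succ_apply', ih, deriv_const_mul_field, deriv_fun_mul, dg, Polynomial.deriv,
      PH_succ, pow_succ]
    · simp only [eval_sub, eval_mul, eval_ofNat, eval_X]
      ring
    · exact Polynomial.differentiableAt _
    · fun_prop

lemma physHermite_eq (n : ℕ) (x : ℝ) : physHermite n x = (PH n).eval x := by
  rw [physHermite, iteratedDeriv_eq_iterate, deriv_gaussian_eq_PH]
  have h1 : Real.exp (x ^ 2) * Real.exp (-x ^ 2) = 1 := by rw [← Real.exp_add]; simp
  have h2 : ((-1 : ℝ) ^ n) * ((-1 : ℝ) ^ n) = 1 := by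
    rw [← pow_add, ← two_mul, pow_mul]; norm_num
  linear_combination Real.exp (x ^ 2) * Real.exp (-x ^ 2) * (PH n).eval x * h2
    + (PH n).eval x * h1

/-- Hermite linearization: `H_r(x)²/(2^r r!) = ∑_{k=0}^r (r!/(2^k (k!)² (r-k)!)) H_{2k}(x)`. -/
theorem hermite_linearization (r : ℕ) (x : ℝ) :
    physHermite r x ^ 2 / (2 ^ r * r.factorial)
      = ∑ k ∈ Finset.range (r + 1),
          (r.factorial : ℝ) / (2 ^ k * (k.factorial) ^ 2 * (r - k).factorial) *
            physHermite (2 * k) x := by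
  have h0 := congrArg (eval x) (PH_mul r r)
  simp only [eval_mul, eval_finset_sum, eval_natCast] at h0
  have hrefl := Finset.sum_range_reflect
    (fun k => (lc r r k : ℝ) * eval x (PH (r + r - 2 * k))) (r + 1)
  have key : eval x (PH r) ^ 2
      = ∑ k ∈ Finset.range (r + 1), (lc r r (r - k) : ℝ) * eval x (PH (2 * k)) := by
    rw [sq, h0, ← hrefl]
    refine Finset.sum_congr rfl fun k hk => ?_
    have hk' : k ≤ r := by have := Finset.mem_range.mp hk; omega
    have i1 : r + 1 - 1 - k = r - k := by omega
    have i2 : r + r - 2 * (r - k) = 2 * k := by omega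
    rw [i1, i2]
  have hB : (2 ^ r * r.factorial : ℝ) ≠ 0 := by positivity
  have hco : ∀ k, k ≤ r → (lc r r (r - k) : ℝ)
      = (r.factorial : ℝ) / (2 ^ k * (k.factorial) ^ 2 * (r - k).factorial)
        * (2 ^ r * r.factorial) := by
    intro k hk
    have hcast : (r.choose k : ℝ) = r.factorial / (k.factorial * (r - k).factorial) :=
      Nat.cast_choose ℝ hk
    have hpow : ((2 : ℝ)) ^ (r - k) * 2 ^ k = 2 ^ r := by
      rw [← pow_add]; congr 1; omega
    have hrk : r - (r - k) = k := by omega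
    rw [lc, Nat.choose_symm hk]
    push_cast
    rw [hcast]
    have h1 : (k.factorial : ℝ) ≠ 0 := by positivity
    have h2 : ((r - k).factorial : ℝ) ≠ 0 := by positivity
    field_simp
    linear_combination hpow
  rw [physHermite_eq, key, Finset.sum_div]
  refine Finset.sum_congr rfl fun k hk => ?_
  have hk' : k ≤ r := by have := Finset.mem_range.mp hk; omega
  rw [physHermite_eq, hco k hk']
  field_simp
end
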